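/- arXiv:2403.01075 — 7 statements merged into one kernel-verified Lean document; each statement's English description precedes it below -/
import Mathlib

section
/- Let Γ be a connected (X,2)-distance transitive bipartite graph of valency r ≥ 3, where X ≤ Aut(Γ), and assume that for a vertex u the stabilizer X_u acts regularly on the neighbourhood Γ(u). Then Γ is isomorphic to the complete bipartite graph K_{r,r} or to K_{r+1,r+1} minus a perfect matching. -/
open SimpleGraph

/-- `K_{r+1,r+1}` minus a perfect matching. -/
def completeBipartiteMinusMatching (r : ℕ) : SimpleGraph (Fin r ⊕ Fin r) :=
  SimpleGraph.fromRel (fun a b => ∃ i j : Fin r, i ≠ j ∧ a = Sum.inl i ∧ b = Sum.inr j)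

instance grpAct {V : Type*} (G : SimpleGraph V) : MulAction (G ≃g G) V where
  smul x v := x v
  one_smul _ := rfl
  mul_smul _ _ _ := rfl

lemma dist_two_iff {V : Type*} (Γ : SimpleGraph V) {u w : V} :
    Γ.dist u w = 2 ↔ u ≠ w ∧ ¬ Γ.Adj u w ∧ ∃ v, Γ.Adj u v ∧ Γ.Adj v w := by
  constructor
  · intro h
    have hne : Γ.dist u w ≠ 0 := by omega
    obtain ⟨p, hp⟩ := exists_walk_of_dist_ne_zero hne
    have hun : u ≠ w := (dist_ne_zero_iff_ne_and_reachable.mp hne).1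
    have hna : ¬ Γ.Adj u w := fun ha => by
      have := dist_eq_one_iff_adj.mpr ha; omega
    refine ⟨hun, hna, ?_⟩
    rw [h] at hp
    cases p with
    | nil => simp at hp
    | cons h1 q =>
      cases q with
      | nil => simp at hp
      | cons h2 q2 =>
        cases q2 with
        | nil => exact ⟨_, h1, h2⟩
        | cons h3 q3 => simp [SimpleGraph.Walk.length_cons] at hp
  · rintro ⟨hne, hna, v, h1, h2⟩
    have hle : Γ.dist u w ≤ 2 := by
      have := Γ.dist_le (SimpleGraph.Walk.cons h1 (SimpleGraph.Walk.cons h2 SimpleGraph.Walk.nil))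
      simpa using this
    have hr : Γ.Reachable u w := ⟨SimpleGraph.Walk.cons h1 (SimpleGraph.Walk.cons h2 SimpleGraph.Walk.nil)⟩
    have h0 : Γ.dist u w ≠ 0 := dist_ne_zero_iff_ne_and_reachable.mpr ⟨hne, hr⟩
    have h1' : Γ.dist u w ≠ 1 := fun h => hna (dist_eq_one_iff_adj.mp h)
    omega


lemma cbmm_adj_inl_inr (r : ℕ) (i j : Fin r) :
    (completeBipartiteMinusMatching r).Adj (Sum.inl i) (Sum.inr j) ↔ i ≠ j := by
  simp [completeBipartiteMinusMatching, SimpleGraph.fromRel_adj]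

lemma cbmm_adj_inr_inl (r : ℕ) (i j : Fin r) :
    (completeBipartiteMinusMatching r).Adj (Sum.inr i) (Sum.inl j) ↔ j ≠ i := by
  rw [SimpleGraph.adj_comm]
  exact cbmm_adj_inl_inr r j i

lemma cbmm_adj_inl_inl (r : ℕ) (i j : Fin r) :
    ¬ (completeBipartiteMinusMatching r).Adj (Sum.inl i) (Sum.inl j) := by
  simp [completeBipartiteMinusMatching, SimpleGraph.fromRel_adj]

lemma cbmm_adj_inr_inr (r : ℕ) (i j : Fin r) :
    ¬ (completeBipartiteMinusMatching r).Adj (Sum.inr i) (Sum.inr j) := by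
  simp [completeBipartiteMinusMatching, SimpleGraph.fromRel_adj]

lemma bool_chain {x y z : Bool} (h1 : x ≠ y) (h2 : y ≠ z) : x = z := by
  cases x <;> cases y <;> cases z <;> simp_all

lemma key_count {V : Type*} [Fintype V] [DecidableEq V] (Γ : SimpleGraph V) [DecidableRel Γ.Adj]
    (c : V → Bool) (hc : ∀ {a b : V}, Γ.Adj a b → c a ≠ c b)
    (r : ℕ) (hr : 3 ≤ r) (hreg : ∀ v : V, Γ.degree v = r)
    (X : Subgroup (Γ ≃g Γ))
    (hdt : ∀ i ∈ ({1, 2} : Set ℕ), ∀ u v w : V, Γ.dist u v = i → Γ.dist u w = i →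
      ∃ x ∈ X, x u = u ∧ x v = w)
    (a : V)
    (hra : ∀ x ∈ X, x a = a → ∀ v : V, Γ.Adj a v → x v = v → x = 1) :
    (Finset.univ.filter (fun w => Γ.dist a w = 2)).card = r ∧
    ∀ w, Γ.dist a w = 2 → (Γ.neighborFinset w ∩ Γ.neighborFinset a).card = r - 1 := by
  classical
  haveI : Finite (Γ ≃g Γ) :=
    Finite.of_injective (fun x => (x : V → V)) DFunLike.coe_injective
  set D2 : Finset V := Finset.univ.filter (fun w => Γ.dist a w = 2) with hD2
  have hmemD2 : ∀ w, w ∈ D2 ↔ Γ.dist a w = 2 := by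
    intro w; simp [hD2]
  -- the subgroup K = X_a
  set K : Subgroup (Γ ≃g Γ) := X ⊓ MulAction.stabilizer (Γ ≃g Γ) a with hK
  have hmemK : ∀ x : Γ ≃g Γ, x ∈ K ↔ x ∈ X ∧ x a = a := by
    intro x
    simp [hK, MulAction.mem_stabilizer_iff]
  -- a neighbor v₀ of a
  have hNa : (Γ.neighborFinset a).card = r := by rw [Γ.card_neighborFinset_eq_degree]; exact hreg a
  have hNane : (Γ.neighborFinset a).Nonempty := by rw [← Finset.card_pos, hNa]; omega
  obtain ⟨v₀, hv₀⟩ := hNane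
  rw [Γ.mem_neighborFinset] at hv₀
  -- distance-2 preservation
  have hD2map : ∀ x : Γ ≃g Γ, x a = a → ∀ w, Γ.dist a w = 2 → Γ.dist a (x w) = 2 := by
    intro x hxa w hw
    rw [dist_two_iff] at hw ⊢
    obtain ⟨hne, hna, v, h1, h2⟩ := hw
    refine ⟨fun h => hne (x.injective (by rw [hxa, ← h])), fun h => ?_, ⟨x v, ?_, ?_⟩⟩
    · rw [← hxa] at h; exact hna (x.map_adj_iff.mp h)
    · rw [← hxa]; exact x.map_adj_iff.mpr h1
    · exact x.map_adj_iff.mpr h2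
  -- orbit of v₀ is the neighborhood
  have horb1 : MulAction.orbit K v₀ = ↑(Γ.neighborFinset a) := by
    ext t
    simp only [MulAction.mem_orbit_iff, Finset.coe_sort_coe, Finset.mem_coe, Γ.mem_neighborFinset]
    constructor
    · rintro ⟨⟨k, hk⟩, rfl⟩
      have hka := ((hmemK k).mp hk).2
      have : (⟨k, hk⟩ : K) • v₀ = k v₀ := rfl
      rw [this, ← hka]
      exact k.map_adj_iff.mpr hv₀
    · intro ht
      obtain ⟨x, hx, hxa, hxv⟩ := hdt 1 (by simp) a v₀ t
        (dist_eq_one_iff_adj.mpr hv₀) (dist_eq_one_iff_adj.mpr ht)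
      exact ⟨⟨x, (hmemK x).mpr ⟨hx, hxa⟩⟩, hxv⟩
  -- the stabilizer of v₀ in K is trivial
  have hstab1 : MulAction.stabilizer K v₀ = ⊥ := by
    rw [Subgroup.eq_bot_iff_forall]
    rintro ⟨k, hk⟩ hks
    rw [MulAction.mem_stabilizer_iff] at hks
    have hkv : k v₀ = v₀ := hks
    obtain ⟨hkX, hka⟩ := (hmemK k).mp hk
    have := hra k hkX hka v₀ hv₀ hkv
    exact Subtype.ext this
  -- |K| = r
  have hcardK : Nat.card K = r := by
    have h1 := MulAction.index_stabilizer K v₀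
    rw [hstab1, Subgroup.index_bot, horb1, Set.ncard_coe_finset, hNa] at h1
    exact h1
  -- D2 is nonempty: pick w₀
  have hsameside : ∀ w, Γ.dist a w = 2 → c w = c a := by
    intro w hw
    obtain ⟨_, _, v, h1, h2⟩ := (dist_two_iff Γ).mp hw
    exact (bool_chain (hc h1) (hc h2)).symm
  have hd2of : ∀ v w, Γ.Adj a v → Γ.Adj v w → w ≠ a → Γ.dist a w = 2 := by
    intro v w h1 h2 hne
    rw [dist_two_iff]
    refine ⟨hne.symm, fun h => ?_, ⟨v, h1, h2⟩⟩
    exact hc h (bool_chain (hc h1) (hc h2))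
  obtain ⟨w₀, hw₀v, hw₀a⟩ : ∃ w, Γ.Adj v₀ w ∧ w ≠ a := by
    have h2 : ((Γ.neighborFinset v₀).erase a).Nonempty := by
      rw [← Finset.card_pos]
      have := Finset.pred_card_le_card_erase (s := Γ.neighborFinset v₀) (a := a)
      have h3 : (Γ.neighborFinset v₀).card = r := by
        rw [Γ.card_neighborFinset_eq_degree]; exact hreg v₀
      omega
    obtain ⟨w, hw⟩ := h2
    rw [Finset.mem_erase, Γ.mem_neighborFinset] at hw
    exact ⟨w, hw.2, hw.1⟩
  have hw₀ : Γ.dist a w₀ = 2 := hd2of v₀ w₀ hv₀ hw₀v hw₀a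
  -- orbit of w₀ is D2
  have horb2 : MulAction.orbit K w₀ = ↑D2 := by
    ext t
    rw [MulAction.mem_orbit_iff, Finset.mem_coe, hmemD2]
    constructor
    · rintro ⟨⟨k, hk⟩, rfl⟩
      obtain ⟨hkX, hka⟩ := (hmemK k).mp hk
      exact hD2map k hka w₀ hw₀
    · intro ht
      obtain ⟨x, hx, hxa, hxv⟩ := hdt 2 (by simp) a w₀ t hw₀ ht
      exact ⟨⟨x, (hmemK x).mpr ⟨hx, hxa⟩⟩, hxv⟩
  -- |D2| divides r
  have hdvd : D2.card ∣ r := by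
    have h1 := MulAction.index_stabilizer K w₀
    rw [horb2, Set.ncard_coe_finset] at h1
    rw [← h1, ← hcardK]
    exact Subgroup.index_dvd_card _
  -- row structure
  have hrow : ∀ v, Γ.Adj a v → D2.filter (fun w => Γ.Adj v w) = (Γ.neighborFinset v).erase a := by
    intro v hv
    ext w
    rw [Finset.mem_filter, Finset.mem_erase, Γ.mem_neighborFinset]
    constructor
    · rintro ⟨hw2, hadj⟩
      rw [hmemD2] at hw2
      refine ⟨fun h => ?_, hadj⟩
      subst h
      rw [SimpleGraph.dist_self] at hw2
      omega
    · rintro ⟨hne, hadj⟩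
      exact ⟨(hmemD2 w).mpr (hd2of v w hv hadj hne), hadj⟩
  have hrowcard : ∀ v, Γ.Adj a v → (D2.filter (fun w => Γ.Adj v w)).card = r - 1 := by
    intro v hv
    have hm : a ∈ Γ.neighborFinset v := by rw [Γ.mem_neighborFinset]; exact hv.symm
    rw [hrow v hv, Finset.card_erase_of_mem hm, Γ.card_neighborFinset_eq_degree, hreg v]
  -- column structure
  have hcol : ∀ w, (Γ.neighborFinset a).filter (fun v => Γ.Adj v w)
      = Γ.neighborFinset w ∩ Γ.neighborFinset a := by
    intro w
    ext v
    simp only [Finset.mem_filter, Finset.mem_inter, Γ.mem_neighborFinset]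
    exact ⟨fun ⟨h1, h2⟩ => ⟨h2.symm, h1⟩, fun ⟨h1, h2⟩ => ⟨h2, h1.symm⟩⟩
  -- constancy of c₂
  have hconst : ∀ w, Γ.dist a w = 2 → (Γ.neighborFinset w ∩ Γ.neighborFinset a).card
      = (Γ.neighborFinset w₀ ∩ Γ.neighborFinset a).card := by
    intro w hw
    obtain ⟨x, hxX, hxa, hxw⟩ := hdt 2 (by simp) a w₀ w hw₀ hw
    have himg : Finset.image (fun t => x t) (Γ.neighborFinset w₀ ∩ Γ.neighborFinset a)
        = Γ.neighborFinset w ∩ Γ.neighborFinset a := by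
      ext t
      simp only [Finset.mem_image, Finset.mem_inter, Γ.mem_neighborFinset]
      constructor
      · rintro ⟨s, ⟨h1, h2⟩, rfl⟩
        exact ⟨by rw [← hxw]; exact x.map_adj_iff.mpr h1,
               by rw [← hxa]; exact x.map_adj_iff.mpr h2⟩
      · rintro ⟨h1, h2⟩
        refine ⟨x.symm t, ⟨?_, ?_⟩, x.apply_symm_apply t⟩
        · have h3 : Γ.Adj (x w₀) (x (x.symm t)) := by
            rw [x.apply_symm_apply, hxw]; exact h1
          exact x.map_adj_iff.mp h3
        · have h3 : Γ.Adj (x a) (x (x.symm t)) := by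
            rw [x.apply_symm_apply, hxa]; exact h2
          exact x.map_adj_iff.mp h3
    rw [← himg, Finset.card_image_of_injective _ x.injective]
  set cst := (Γ.neighborFinset w₀ ∩ Γ.neighborFinset a).card with hcst
  -- double counting
  have hsum : D2.card * cst = r * (r - 1) := by
    have h1 : ∑ v ∈ Γ.neighborFinset a, (D2.filter (fun w => Γ.Adj v w)).card
        = ∑ w ∈ D2, ((Γ.neighborFinset a).filter (fun v => Γ.Adj v w)).card := by
      simp only [Finset.card_filter]
      exact Finset.sum_comm
    have h2 : ∑ v ∈ Γ.neighborFinset a, (D2.filter (fun w => Γ.Adj v w)).card = r * (r - 1) := by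
      rw [Finset.sum_congr rfl (fun v hv => hrowcard v (by rw [Γ.mem_neighborFinset] at hv; exact hv)),
        Finset.sum_const, hNa, smul_eq_mul]
    have h3 : ∑ w ∈ D2, ((Γ.neighborFinset a).filter (fun v => Γ.Adj v w)).card
        = D2.card * cst := by
      rw [Finset.sum_congr rfl (fun w hw => by
        rw [hcol w, hconst w ((hmemD2 w).mp hw)]), Finset.sum_const, smul_eq_mul]
    rw [← h3, ← h1, h2]
  have hcstle : cst ≤ r := by
    rw [hcst]
    calc (Γ.neighborFinset w₀ ∩ Γ.neighborFinset a).card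
        ≤ (Γ.neighborFinset a).card := Finset.card_le_card Finset.inter_subset_right
      _ = r := hNa
  -- arithmetic: D2.card = r and cst = r - 1
  have hd2pos : 0 < D2.card := Finset.card_pos.mpr ⟨w₀, (hmemD2 w₀).mpr hw₀⟩
  obtain ⟨k, hk⟩ := hdvd
  have hkpos : 0 < k := by
    rcases Nat.eq_zero_or_pos k with h | h
    · subst h; omega
    · exact h
  have hcardD2 : D2.card = r := by
    rcases Nat.lt_or_ge k 2 with h | h
    · interval_cases k
      omega
    · exfalso
      have h2d : 2 * D2.card ≤ r := by
        calc 2 * D2.card ≤ k * D2.card := Nat.mul_le_mul_right _ h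
          _ = D2.card * k := Nat.mul_comm _ _
          _ = r := hk.symm
      have hled : r - 1 ≤ D2.card := by
        have h5 : (r - 1) * r ≤ D2.card * r := by
          calc (r - 1) * r = r * (r - 1) := Nat.mul_comm _ _
            _ = D2.card * cst := hsum.symm
            _ ≤ D2.card * r := Nat.mul_le_mul_left _ hcstle
        exact Nat.le_of_mul_le_mul_right h5 (by omega)
      omega
  have hcstval : cst = r - 1 := by
    rw [hcardD2] at hsum
    exact Nat.eq_of_mul_eq_mul_left (by omega) hsum
  exact ⟨hcardD2, fun w hw => by rw [hconst w hw]; exact hcstval⟩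

/-- A connected `(X,2)`-distance transitive bipartite graph of valency `r ≥ 3` in which
a vertex stabilizer `X_u` is regular on the neighbourhood `Γ(u)` is isomorphic to
`K_{r,r}` or to `K_{r+1,r+1}` minus a perfect matching. -/
theorem stmt5 {V : Type*} [Fintype V] (Γ : SimpleGraph V) [DecidableRel Γ.Adj]
    (hconn : Γ.Connected)
    (hbip : ∃ c : V → Bool, ∀ {a b : V}, Γ.Adj a b → c a ≠ c b)
    (r : ℕ) (hr : 3 ≤ r) (hreg : ∀ v : V, Γ.degree v = r)
    (X : Subgroup (Γ ≃g Γ))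
    (hvt : ∀ u v : V, ∃ x ∈ X, x u = v)
    (hdt : ∀ i ∈ ({1, 2} : Set ℕ), ∀ u v w : V, Γ.dist u v = i → Γ.dist u w = i →
      ∃ x ∈ X, x u = u ∧ x v = w)
    (u : V)
    (hregact : ∀ x ∈ X, x u = u → ∀ v : V, Γ.Adj u v → x v = v → x = 1) :
    Nonempty (Γ ≃g completeBipartiteGraph (Fin r) (Fin r)) ∨
      Nonempty (Γ ≃g completeBipartiteMinusMatching (r + 1)) := by
  classical
  obtain ⟨c, hc⟩ := hbip
  have hmemN : ∀ a b : V, b ∈ Γ.neighborFinset a ↔ Γ.Adj a b := fun a b =>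
    Γ.mem_neighborFinset a b
  -- cancellation facts for the automorphism group
  have happ_inv : ∀ (g : Γ ≃g Γ) (t : V), g⁻¹ (g t) = t := by
    intro g t
    have h1 : (g⁻¹ * g) t = t := by rw [inv_mul_cancel]; rfl
    exact h1
  have happ_inv' : ∀ (g : Γ ≃g Γ) (t : V), g (g⁻¹ t) = t := by
    intro g t
    have h1 : (g * g⁻¹) t = t := by rw [mul_inv_cancel]; rfl
    exact h1
  -- regularity of vertex stabilizers at every vertex, by conjugation
  have hra : ∀ a : V, ∀ x ∈ X, x a = a → ∀ v : V, Γ.Adj a v → x v = v → x = 1 := by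
    intro a x hx hxa v hav hxv
    obtain ⟨g, hg, hgu⟩ := hvt u a
    have h1 : (g⁻¹ * x * g) ∈ X := mul_mem (mul_mem (inv_mem hg) hx) hg
    have h2 : (g⁻¹ * x * g) u = u := by
      show g⁻¹ (x (g u)) = u
      rw [hgu, hxa, ← hgu, happ_inv]
    have h3 : Γ.Adj u (g⁻¹ v) := by
      have h4 := (g⁻¹ : Γ ≃g Γ).map_adj_iff.mpr hav
      rwa [show (g⁻¹ : Γ ≃g Γ) a = u by rw [← hgu, happ_inv]] at h4
    have h4 : (g⁻¹ * x * g) (g⁻¹ v) = g⁻¹ v := by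
      show g⁻¹ (x (g (g⁻¹ v))) = g⁻¹ v
      rw [happ_inv', hxv]
    have h5 := hregact (g⁻¹ * x * g) h1 h2 (g⁻¹ v) h3 h4
    have h6 : x = g * (g⁻¹ * x * g) * g⁻¹ := by group
    rw [h5] at h6
    rw [h6]
    group
  have hP := fun a => key_count Γ c hc r hr hreg X hdt a (hra a)
  -- notation
  set D2u : Finset V := Finset.univ.filter (fun w => Γ.dist u w = 2) with hD2u
  have hmemD2u : ∀ w, w ∈ D2u ↔ Γ.dist u w = 2 := by intro w; simp [hD2u]
  have hcardD2u : D2u.card = r := (hP u).1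
  have hc2 : ∀ w, Γ.dist u w = 2 →
      (Γ.neighborFinset w ∩ Γ.neighborFinset u).card = r - 1 := (hP u).2
  have hNcard : ∀ v : V, (Γ.neighborFinset v).card = r := by
    intro v; rw [Γ.card_neighborFinset_eq_degree]; exact hreg v
  -- generic facts
  have hd2of : ∀ a v w : V, Γ.Adj a v → Γ.Adj v w → w ≠ a → Γ.dist a w = 2 := by
    intro a v w h1 h2 hne
    rw [dist_two_iff]
    exact ⟨hne.symm, fun h => hc h (bool_chain (hc h1) (hc h2)), ⟨v, h1, h2⟩⟩
  have hsameside : ∀ a w : V, Γ.dist a w = 2 → c w = c a := by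
    intro a w hw
    obtain ⟨_, _, v, h1, h2⟩ := (dist_two_iff Γ).mp hw
    exact (bool_chain (hc h1) (hc h2)).symm
  have hrow : ∀ a v : V, Γ.Adj a v →
      (Finset.univ.filter (fun w => Γ.dist a w = 2)).filter (fun w => Γ.Adj v w)
        = (Γ.neighborFinset v).erase a := by
    intro a v hv
    ext w
    simp only [Finset.mem_filter, Finset.mem_univ, true_and, Finset.mem_erase,
      Γ.mem_neighborFinset]
    constructor
    · rintro ⟨hw2, hadj⟩
      refine ⟨fun h => ?_, hadj⟩
      subst h
      rw [SimpleGraph.dist_self] at hw2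
      omega
    · rintro ⟨hne, hadj⟩
      exact ⟨hd2of a v w hv hadj hne, hadj⟩
  -- the unique neighbour of w outside N(u), for w at distance two from u
  have hunique : ∀ w, Γ.dist u w = 2 →
      ∃ t, Γ.neighborFinset w \ Γ.neighborFinset u = {t} := by
    intro w hw
    have h1 := Finset.card_sdiff_add_card_inter (Γ.neighborFinset w) (Γ.neighborFinset u)
    rw [hNcard w, hc2 w hw] at h1
    exact Finset.card_eq_one.mp (by omega)
  -- this neighbour does not depend on w
  have hconstz : ∀ w w' t t', Γ.dist u w = 2 → Γ.dist u w' = 2 →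
      Γ.neighborFinset w \ Γ.neighborFinset u = {t} →
      Γ.neighborFinset w' \ Γ.neighborFinset u = {t'} → t = t' := by
    intro w w' t t' hw hw' ht ht'
    by_cases hww : w = w'
    · subst hww
      rw [ht] at ht'
      exact Finset.singleton_inj.mp ht'
    -- common neighbour v of w and w' in N(u)
    obtain ⟨v, hv⟩ : ((Γ.neighborFinset w ∩ Γ.neighborFinset u) ∩
        (Γ.neighborFinset w' ∩ Γ.neighborFinset u)).Nonempty := by
      rw [← Finset.card_pos]
      have h1 := Finset.card_union_add_card_inter
        (Γ.neighborFinset w ∩ Γ.neighborFinset u) (Γ.neighborFinset w' ∩ Γ.neighborFinset u)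
      have h2 : (Γ.neighborFinset w ∩ Γ.neighborFinset u) ∪
          (Γ.neighborFinset w' ∩ Γ.neighborFinset u) ⊆ Γ.neighborFinset u :=
        Finset.union_subset Finset.inter_subset_right Finset.inter_subset_right
      have h3 := Finset.card_le_card h2
      rw [hc2 w hw, hc2 w' hw'] at h1
      rw [hNcard u] at h3
      omega
    simp only [Finset.mem_inter, Γ.mem_neighborFinset] at hv
    obtain ⟨⟨hvw, hvu⟩, ⟨hvw', _⟩⟩ := hv
    -- t and t' both lie in D2(v) \ (N(u).erase v), a singleton
    have hsub : (Γ.neighborFinset u).erase v ⊆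
        Finset.univ.filter (fun x => Γ.dist v x = 2) := by
      rw [← hrow v u hvu.symm]
      exact Finset.filter_subset _ _
    have hcardsub : ((Γ.neighborFinset u).erase v).card = r - 1 := by
      rw [Finset.card_erase_of_mem (by rw [Γ.mem_neighborFinset]; exact hvu), hNcard u]
    have hsdcard : ((Finset.univ.filter (fun x => Γ.dist v x = 2)) \
        (Γ.neighborFinset u).erase v).card = 1 := by
      rw [Finset.card_sdiff_of_subset hsub, hcardsub, (hP v).1]
      omega
    have hmem : ∀ s w₁, Γ.Adj v w₁ →
        Γ.neighborFinset w₁ \ Γ.neighborFinset u = {s} →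
        s ∈ (Finset.univ.filter (fun x => Γ.dist v x = 2)) \ (Γ.neighborFinset u).erase v := by
      intro s w₁ hvw₁ hs
      have hsmem : s ∈ Γ.neighborFinset w₁ \ Γ.neighborFinset u := by
        rw [hs]; exact Finset.mem_singleton_self s
      rw [Finset.mem_sdiff, Γ.mem_neighborFinset] at hsmem
      obtain ⟨hsw₁, hsnu⟩ := hsmem
      rw [Finset.mem_sdiff]
      constructor
      · rw [Finset.mem_filter]
        refine ⟨Finset.mem_univ s, hd2of v w₁ s hvw₁ hsw₁ ?_⟩
        intro h
        subst h
        exact hsnu (by rw [Γ.mem_neighborFinset]; exact hvu)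
      · intro hmem2
        exact hsnu (Finset.mem_of_mem_erase hmem2)
    have h1 := hmem t w hvw.symm ht
    have h2 := hmem t' w' hvw'.symm ht'
    exact Finset.card_le_one.mp (le_of_eq hsdcard) t h1 t' h2
  -- fix w₀ and z
  obtain ⟨w₀, hw₀mem⟩ := Finset.card_pos.mp (show 0 < D2u.card by rw [hcardD2u]; omega)
  have hw₀ : Γ.dist u w₀ = 2 := (hmemD2u w₀).mp hw₀mem
  obtain ⟨z, hzset⟩ := hunique w₀ hw₀
  have hzall : ∀ w, Γ.dist u w = 2 →
      Γ.neighborFinset w \ Γ.neighborFinset u = {z} := by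
    intro w hw
    obtain ⟨t, ht⟩ := hunique w hw
    rw [ht, hconstz w w₀ t z hw hw₀ ht hzset]
  have hzw₀ : z ∈ Γ.neighborFinset w₀ \ Γ.neighborFinset u := by
    rw [hzset]; exact Finset.mem_singleton_self z
  have hznu : z ∉ Γ.neighborFinset u := (Finset.mem_sdiff.mp hzw₀).2
  have hzadj : ∀ w, Γ.dist u w = 2 → Γ.Adj w z := by
    intro w hw
    have h1 : z ∈ Γ.neighborFinset w \ Γ.neighborFinset u := by
      rw [hzall w hw]; exact Finset.mem_singleton_self z
    exact (hmemN _ _).mp (Finset.mem_sdiff.mp h1).1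
  have hcz : c z ≠ c u := by
    have h1 := hc (hzadj w₀ hw₀)
    have h2 := hsameside u w₀ hw₀
    rw [h2] at h1
    exact fun h => h1 h.symm
  have hNz : Γ.neighborFinset z = D2u := by
    refine (Finset.eq_of_subset_of_card_le ?_ ?_).symm
    · intro w hw
      rw [Γ.mem_neighborFinset]
      exact (hzadj w ((hmemD2u w).mp hw)).symm
    · rw [hNcard z, hcardD2u]
  have hunD2 : u ∉ D2u := by
    rw [hmemD2u, SimpleGraph.dist_self]
    omega
  -- the vertex set is {u} ∪ {z} ∪ N(u) ∪ D2u
  set S : Finset V := insert u (insert z (Γ.neighborFinset u ∪ D2u)) with hS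
  have hmemS : ∀ t, t ∈ S ↔ t = u ∨ t = z ∨ t ∈ Γ.neighborFinset u ∨ t ∈ D2u := by
    intro t
    simp [hS, Finset.mem_insert, Finset.mem_union, or_assoc]
  have hclosed : ∀ s ∈ S, ∀ b, Γ.Adj s b → b ∈ S := by
    intro s hs b hb
    rw [hmemS] at hs
    rw [hmemS]
    rcases hs with rfl | rfl | hs | hs
    · right; right; left; rw [Γ.mem_neighborFinset]; exact hb
    · right; right; right; rw [← hNz, Γ.mem_neighborFinset]; exact hb
    · by_cases hbu : b = u
      · left; exact hbu
      · right; right; right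
        have h1 : b ∈ (Γ.neighborFinset s).erase u := by
          rw [Finset.mem_erase, Γ.mem_neighborFinset]
          exact ⟨hbu, hb⟩
        rw [← hrow u s ((hmemN _ _).mp hs)] at h1
        rw [hD2u]
        exact Finset.mem_of_mem_filter b h1
    · by_cases hbN : b ∈ Γ.neighborFinset u
      · right; right; left; exact hbN
      · right; left
        have h1 : b ∈ Γ.neighborFinset s \ Γ.neighborFinset u :=
          Finset.mem_sdiff.mpr ⟨(hmemN _ _).mpr hb, hbN⟩
        rw [hzall s ((hmemD2u s).mp hs)] at h1
        exact Finset.mem_singleton.mp h1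
  have huniv : ∀ t, t ∈ S := by
    have hwalk : ∀ (s t : V) (p : Γ.Walk s t), s ∈ S → t ∈ S := by
      intro s t p
      induction p with
      | nil => exact id
      | cons h q ih => exact fun hs => ih (hclosed _ hs _ h)
    intro t
    obtain ⟨p⟩ := hconn.preconnected u t
    exact hwalk u t p (by rw [hmemS]; left; rfl)
  have hSuniv : S = Finset.univ := Finset.eq_univ_iff_forall.mpr huniv
  -- cardinalities
  have hdisjND : Disjoint (Γ.neighborFinset u) D2u := by
    rw [Finset.disjoint_left]
    intro x hx hx2
    exact hc ((hmemN _ _).mp hx) (hsameside u x ((hmemD2u x).mp hx2)).symm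
  have hzninset : z ∉ Γ.neighborFinset u ∪ D2u := by
    rw [Finset.mem_union]
    rintro (h | h)
    · exact hznu h
    · exact hcz (hsameside u z ((hmemD2u z).mp h))
  have hun : u ∉ insert z (Γ.neighborFinset u ∪ D2u) := by
    rw [Finset.mem_insert, Finset.mem_union]
    rintro (h | h | h)
    · exact hcz (by rw [← h])
    · exact (Γ.notMem_neighborFinset_self u) h
    · exact hunD2 h
  have hcardS : S.card = 2 * r + 2 := by
    rw [hS, Finset.card_insert_of_notMem hun, Finset.card_insert_of_notMem hzninset,
      Finset.card_union_of_disjoint hdisjND, hNcard u, hcardD2u]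
    omega
  have hcardV : Fintype.card V = 2 * r + 2 := by
    rw [← Finset.card_univ, ← hSuniv, hcardS]
  -- the matching
  have hmex : ∀ w : {x // x ∈ D2u}, ∃ t, Γ.neighborFinset u \ Γ.neighborFinset ↑w = {t} := by
    intro w
    have h1 := Finset.card_sdiff_add_card_inter (Γ.neighborFinset u) (Γ.neighborFinset ↑w)
    rw [hNcard u, Finset.inter_comm, hc2 _ ((hmemD2u _).mp w.2)] at h1
    exact Finset.card_eq_one.mp (by omega)
  choose m hm using hmex
  have hmN : ∀ w, m w ∈ Γ.neighborFinset u := by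
    intro w
    have h1 : m w ∈ Γ.neighborFinset u \ Γ.neighborFinset ↑w := by
      rw [hm w]; exact Finset.mem_singleton_self _
    exact (Finset.mem_sdiff.mp h1).1
  have hmnadj : ∀ w : {x // x ∈ D2u}, ¬ Γ.Adj ↑w (m w) := by
    intro w h
    have h1 : m w ∈ Γ.neighborFinset u \ Γ.neighborFinset ↑w := by
      rw [hm w]; exact Finset.mem_singleton_self _
    exact (Finset.mem_sdiff.mp h1).2 ((hmemN _ _).mpr h)
  have hmadj : ∀ (w : {x // x ∈ D2u}) (v : V),
      v ∈ Γ.neighborFinset u → v ≠ m w → Γ.Adj ↑w v := by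
    intro w v hv hne
    by_contra h
    have h1 : v ∈ Γ.neighborFinset u \ Γ.neighborFinset ↑w :=
      Finset.mem_sdiff.mpr ⟨hv, fun hh => h ((hmemN _ _).mp hh)⟩
    rw [hm w] at h1
    exact hne (Finset.mem_singleton.mp h1)
  have hminj : Function.Injective m := by
    intro w w' hww
    have hvN := hmN w
    have hvadj : Γ.Adj u (m w) := (hmemN _ _).mp hvN
    have h1 : ¬ Γ.Adj ↑w (m w) := hmnadj w
    have h2 : ¬ Γ.Adj ↑w' (m w) := by rw [hww]; exact hmnadj w'
    have hflt := hrow u (m w) hvadj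
    have hcard1 : (D2u \ D2u.filter (fun x => Γ.Adj (m w) x)).card = 1 := by
      rw [Finset.card_sdiff_of_subset (Finset.filter_subset _ _)]
      rw [show D2u.filter (fun x => Γ.Adj (m w) x) = (Γ.neighborFinset (m w)).erase u from by
        rw [hD2u]; exact hflt]
      rw [Finset.card_erase_of_mem (by rw [Γ.mem_neighborFinset]; exact hvadj.symm),
        hNcard, hcardD2u]
      omega
    have hw1 : ↑w ∈ D2u \ D2u.filter (fun x => Γ.Adj (m w) x) :=
      Finset.mem_sdiff.mpr ⟨w.2, fun h => h1 ((Finset.mem_filter.mp h).2.symm)⟩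
    have hw2 : ↑w' ∈ D2u \ D2u.filter (fun x => Γ.Adj (m w) x) :=
      Finset.mem_sdiff.mpr ⟨w'.2, fun h => h2 ((Finset.mem_filter.mp h).2.symm)⟩
    exact Subtype.ext (Finset.card_le_one.mp (le_of_eq hcard1) _ hw1 _ hw2)
  -- the explicit bijection
  have hcardD2u' : Fintype.card {x // x ∈ D2u} = r := by
    rw [Fintype.card_coe]; exact hcardD2u
  set eD : {x // x ∈ D2u} ≃ Fin r := Fintype.equivFinOfCardEq hcardD2u' with heD
  set fl : Fin (r+1) → V :=
    fun i => if h : (i : ℕ) < r then ↑(eD.symm ⟨(i : ℕ), h⟩) else u with hfl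
  set fr : Fin (r+1) → V :=
    fun j => if h : (j : ℕ) < r then m (eD.symm ⟨(j : ℕ), h⟩) else z with hfr
  set f : Fin (r+1) ⊕ Fin (r+1) → V := Sum.elim fl fr with hf
  have hcfl : ∀ i, c (fl i) = c u := by
    intro i
    simp only [hfl]
    by_cases h : (i : ℕ) < r
    · rw [dif_pos h]
      exact hsameside u _ ((hmemD2u _).mp (eD.symm ⟨(i : ℕ), h⟩).2)
    · rw [dif_neg h]
  have hcfr : ∀ j, c (fr j) ≠ c u := by
    intro j
    simp only [hfr]
    by_cases h : (j : ℕ) < r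
    · rw [dif_pos h]
      exact fun hh => hc ((hmemN _ _).mp (hmN _)) hh.symm
    · rw [dif_neg h]
      exact hcz
  have hfld : ∀ i : Fin (r+1), (i : ℕ) < r ∨ ((i : ℕ) = r) := by
    intro i
    have := i.isLt
    omega
  have hmain : ∀ i j : Fin (r+1), Γ.Adj (fl i) (fr j) ↔ i ≠ j := by
    intro i j
    simp only [hfl, hfr]
    by_cases hi : (i : ℕ) < r <;> by_cases hj : (j : ℕ) < r
    · rw [dif_pos hi, dif_pos hj]
      constructor
      · intro hadj hij
        subst hij
        exact hmnadj (eD.symm ⟨(i : ℕ), hi⟩) hadj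
      · intro hij
        refine hmadj _ _ (hmN _) ?_
        intro heq
        have h1 : eD.symm ⟨(j : ℕ), hj⟩ = eD.symm ⟨(i : ℕ), hi⟩ := hminj heq
        have h2 : (⟨(j : ℕ), hj⟩ : Fin r) = ⟨(i : ℕ), hi⟩ := eD.symm.injective h1
        have h3 : (j : ℕ) = (i : ℕ) := Fin.mk_eq_mk.mp h2
        exact hij (Fin.ext h3.symm)
    · rw [dif_pos hi, dif_neg hj]
      have hadj : Γ.Adj (↑(eD.symm ⟨(i : ℕ), hi⟩)) z :=
        hzadj _ ((hmemD2u _).mp (eD.symm ⟨(i : ℕ), hi⟩).2)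
      exact iff_of_true hadj (fun h => hj (h ▸ hi))
    · rw [dif_neg hi, dif_pos hj]
      exact iff_of_true ((hmemN _ _).mp (hmN _)) (fun h => hi (h ▸ hj))
    · rw [dif_neg hi, dif_neg hj]
      refine iff_of_false (fun h => hznu ((hmemN _ _).mpr h)) (fun h => h ?_)
      have h1 := i.isLt
      have h2 := j.isLt
      exact Fin.ext (by omega)
  have hfr_ne_fl : ∀ i j : Fin (r+1), fl i ≠ fr j := by
    intro i j h
    exact hcfr j (by rw [← h]; exact hcfl i)
  have hflinj : Function.Injective fl := by
    intro i j h
    simp only [hfl] at h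
    by_cases hi : (i : ℕ) < r <;> by_cases hj : (j : ℕ) < r
    · rw [dif_pos hi, dif_pos hj] at h
      have h2 := eD.symm.injective (Subtype.ext h)
      exact Fin.ext (Fin.mk_eq_mk.mp h2)
    · rw [dif_pos hi, dif_neg hj] at h
      exact absurd (h ▸ (eD.symm ⟨(i : ℕ), hi⟩).2) hunD2
    · rw [dif_neg hi, dif_pos hj] at h
      exact absurd (h.symm ▸ (eD.symm ⟨(j : ℕ), hj⟩).2) hunD2
    · have h1 := hfld i
      have h2 := hfld j
      exact Fin.ext (by omega)
  have hfrinj : Function.Injective fr := by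
    intro i j h
    simp only [hfr] at h
    by_cases hi : (i : ℕ) < r <;> by_cases hj : (j : ℕ) < r
    · rw [dif_pos hi, dif_pos hj] at h
      have h2 := eD.symm.injective (hminj h)
      exact Fin.ext (Fin.mk_eq_mk.mp h2)
    · rw [dif_pos hi, dif_neg hj] at h
      exact absurd (h ▸ hmN (eD.symm ⟨(i : ℕ), hi⟩)) hznu
    · rw [dif_neg hi, dif_pos hj] at h
      exact absurd (h.symm ▸ hmN (eD.symm ⟨(j : ℕ), hj⟩)) hznu
    · have h1 := hfld i
      have h2 := hfld j
      exact Fin.ext (by omega)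
  have hfinj : Function.Injective f := by
    rintro (i | i) (j | j) h <;> simp only [hf, Sum.elim_inl, Sum.elim_inr] at h
    · rw [hflinj h]
    · exact absurd h (hfr_ne_fl i j)
    · exact absurd h.symm (hfr_ne_fl j i)
    · rw [hfrinj h]
  have hbij : Function.Bijective f := by
    rw [Fintype.bijective_iff_injective_and_card]
    refine ⟨hfinj, ?_⟩
    rw [Fintype.card_sum, Fintype.card_fin, hcardV]
    omega
  refine Or.inr ⟨?_⟩
  have hiso : completeBipartiteMinusMatching (r + 1) ≃g Γ := by
    refine ⟨Equiv.ofBijective f hbij, ?_⟩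
    intro a b
    show Γ.Adj (f a) (f b) ↔ (completeBipartiteMinusMatching (r + 1)).Adj a b
    rcases a with i | i <;> rcases b with j | j <;>
      simp only [hf, Sum.elim_inl, Sum.elim_inr]
    · exact iff_of_false (fun h => hc h (by rw [hcfl i, hcfl j]))
        (cbmm_adj_inl_inl _ i j)
    · rw [hmain i j, cbmm_adj_inl_inr]
    · rw [SimpleGraph.adj_comm, hmain j i, cbmm_adj_inr_inl]
    · exact iff_of_false
        (fun h => hc h (bool_chain (hcfr i) (fun hh => hcfr j hh.symm)))
        (cbmm_adj_inr_inr _ i j)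
  exact hiso.symm
end

section
/- In the Paley graph P(q) with q ≡ 1 (mod 4) a prime power, any two non-adjacent distinct vertices have exactly (q−1)/4 common neighbours. -/
/-!
Write `χ` for the quadratic character. Since `-1` is a square, `u ~ v` iff `u - v` is a nonzero
square, and for a non-square `u - v` the summand `(1 + χ (x - u)) * (1 + χ (x - v))` is `4` when
`x` is a common neighbour of `u` and `v` and `0` otherwise (also at `x = u, v`). Summing over
`x` and expanding, four times the number of common neighbours is
`q + 0 + 0 + ∑ χ (x - u) χ (x - v)`, and the last sum is `-1`: an affine substitution turns it
into `χ (-1)` times the Jacobi sum `J(χ, χ) = -χ (-1)`.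
-/

open SimpleGraph

/-- The Paley graph on a finite field `F`: vertices are field elements, and `u ~ v`
iff `u ≠ v` and `u - v` is a (nonzero) square. -/
def paleyGraph (F : Type*) [Field F] : SimpleGraph F :=
  SimpleGraph.fromRel (fun u v => IsSquare (u - v))

open Finset

lemma isSquare_sub_comm {R : Type*} [CommRing R] (h : IsSquare (-1 : R)) {a b : R} :
    IsSquare (a - b) ↔ IsSquare (b - a) := by
  constructor <;> intro hab <;> simpa using h.mul hab

section Paley

variable {F : Type*} [Field F]

lemma paleyGraph_adj_iff (h : IsSquare (-1 : F)) {u v : F} :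
    (paleyGraph F).Adj u v ↔ u ≠ v ∧ IsSquare (u - v) := by
  rw [paleyGraph, fromRel_adj, ← isSquare_sub_comm h, or_self]

lemma paleyGraph_neighborSet_inter (h : IsSquare (-1 : F)) {u v : F}
    (huv : ¬ IsSquare (u - v)) :
    (paleyGraph F).neighborSet u ∩ (paleyGraph F).neighborSet v
      = {x | IsSquare (x - u) ∧ IsSquare (x - v)} := by
  ext x
  simp only [Set.mem_inter_iff, mem_neighborSet, Set.mem_ofPred_eq, paleyGraph_adj_iff h,
    isSquare_sub_comm h (a := u), isSquare_sub_comm h (a := v)]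
  constructor
  · rintro ⟨⟨-, hxu⟩, -, hxv⟩
    exact ⟨hxu, hxv⟩
  · rintro ⟨hxu, hxv⟩
    refine ⟨⟨?_, hxu⟩, ?_, hxv⟩ <;> rintro rfl
    · exact huv hxv
    · exact huv ((isSquare_sub_comm h).1 hxu)

end Paley

section QuadraticChar

variable {F : Type*} [Field F] [Fintype F] [DecidableEq F]

local notation "χ" => quadraticChar F

lemma one_add_quadraticChar_of_ne_zero {y : F} (hy : y ≠ 0) :
    1 + χ y = if IsSquare y then 2 else 0 := by
  split_ifs with h
  · rw [(quadraticChar_one_iff_isSquare hy).2 h]; norm_num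
  · rw [quadraticChar_neg_one_iff_not_isSquare.2 h]; norm_num

lemma one_add_quadraticChar_mul_one_add_quadraticChar (h : IsSquare (-1 : F)) {u v : F}
    (huv : ¬ IsSquare (u - v)) (x : F) :
    (1 + χ (x - u)) * (1 + χ (x - v))
      = if IsSquare (x - u) ∧ IsSquare (x - v) then 4 else 0 := by
  rcases eq_or_ne x u with rfl | hxu
  · simp [huv, quadraticChar_neg_one_iff_not_isSquare.2 huv]
  rcases eq_or_ne x v with rfl | hxv
  · have hvu : ¬ IsSquare (x - u) := (isSquare_sub_comm h).not.1 huv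
    simp [hvu, quadraticChar_neg_one_iff_not_isSquare.2 hvu]
  rw [one_add_quadraticChar_of_ne_zero (sub_ne_zero.2 hxu),
    one_add_quadraticChar_of_ne_zero (sub_ne_zero.2 hxv)]
  split_ifs <;> simp_all

lemma quadraticChar_sum_sub (hF : ringChar F ≠ 2) (u : F) : ∑ x, χ (x - u) = 0 :=
  ((Equiv.subRight u).sum_comp χ).trans (quadraticChar_sum_zero hF)

lemma quadraticChar_jacobiSum_self (hF : ringChar F ≠ 2) : jacobiSum χ χ = -χ (-1) := by
  simpa [(quadraticChar_isQuadratic F).inv] using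
    jacobiSum_nontrivial_inv (quadraticChar_ne_one hF)

lemma quadraticChar_sum_mul_sub_sub (hF : ringChar F ≠ 2) {u v : F} (huv : u ≠ v) :
    ∑ x, χ (x - u) * χ (x - v) = -1 := by
  set a := v - u
  have ha : a ≠ 0 := sub_ne_zero.2 huv.symm
  -- substitute `x = u + a y`: then `x - u = a y` and `x - v = -a (1 - y)`
  have hsubst : ∀ y, χ (u + a * y - u) * χ (u + a * y - v) = χ (-1) * (χ y * χ (1 - y)) := by
    intro y
    have : u + a * y - v = a * (-1 * (1 - y)) := by simp only [a]; ring
    rw [this, add_sub_cancel_left, map_mul, map_mul, map_mul]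
    linear_combination (χ (-1) * χ y * χ (1 - y)) * quadraticChar_sq_one ha
  rw [← Fintype.sum_bijective _ ((AddGroup.addLeft_bijective u).comp (mulLeft_bijective₀ a ha))
    _ _ fun _ ↦ rfl]
  have hJ := quadraticChar_jacobiSum_self hF
  rw [jacobiSum] at hJ
  simp only [Function.comp_apply, hsubst, ← mul_sum, hJ]
  linear_combination -quadraticChar_sq_one (neg_ne_zero.2 (one_ne_zero' F))

lemma four_mul_card_filter_isSquare_sub (hF : ringChar F ≠ 2) (h : IsSquare (-1 : F)) {u v : F}
    (huv : ¬ IsSquare (u - v)) :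
    4 * #{x | IsSquare (x - u) ∧ IsSquare (x - v)} = Fintype.card F - 1 := by
  have hne : u ≠ v := by rintro rfl; exact huv (by simp)
  have hsum : ∑ x, (1 + χ (x - u)) * (1 + χ (x - v)) = Fintype.card F - 1 := by
    simp only [add_mul, mul_add, one_mul, mul_one, sum_add_distrib, quadraticChar_sum_sub hF,
      quadraticChar_sum_mul_sub_sub hF hne, sum_const, card_univ, nsmul_eq_mul]
    ring
  simp only [one_add_quadraticChar_mul_one_add_quadraticChar h huv, sum_ite, sum_const,
    nsmul_eq_mul] at hsum
  have := Fintype.card_pos (α := F)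
  omega

end QuadraticChar

/-- In the Paley graph `P(q)` with `q ≡ 1 (mod 4)` a prime power, any two non-adjacent distinct
vertices have exactly `(q - 1)/4` common neighbours. -/
theorem stmt7 {F : Type*} [Field F] [Fintype F] (q : ℕ) (hq : Fintype.card F = q)
    (hq1 : q % 4 = 1) (u v : F) (hne : u ≠ v) (huv : ¬ (paleyGraph F).Adj u v) :
    ((paleyGraph F).neighborSet u ∩ (paleyGraph F).neighborSet v).ncard = (q - 1) / 4 := by
  classical
  have hF : ringChar F ≠ 2 := fun h ↦ by
    have := FiniteField.even_card_of_char_two h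
    omega
  have h : IsSquare (-1 : F) := FiniteField.isSquare_neg_one_iff.2 (by omega)
  have hsq : ¬ IsSquare (u - v) := fun hsq ↦ huv ((paleyGraph_adj_iff h).2 ⟨hne, hsq⟩)
  have hcard := four_mul_card_filter_isSquare_sub hF h hsq
  rw [paleyGraph_neighborSet_inter h hsq, Set.ncard_eq_toFinset_card', Set.toFinset_ofPred]
  omega
end

section
/- Let PSL(2, q) ≤ G ≤ PΓL(2, q) with q = r^f ≡ 3 (mod 4), where G/PSL(2, q) is cyclic (contains no diagonal automorphism). Then every dihedral subgroup of G of order q + 1 lies inside PSL(2, q). -/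
open Matrix
open scoped MatrixGroups

/-- Let `q = r^f ≡ 3 (mod 4)` be a prime power, and let `G` be a group with a normal
subgroup `T ≅ PSL(2, q)` whose quotient `G/T` is cyclic of order dividing `f`
(so in particular `G/T` contains no diagonal automorphism, as for
`PSL(2,q) ≤ G ≤ PΓL(2,q)`). Then every dihedral subgroup of `G` of order `q + 1`
lies inside `T`. -/
theorem stmt12 {F : Type*} [Field F] [Fintype F] [DecidableEq F]
    (r f q : ℕ) (hr : r.Prime) (hf : 0 < f) (hq : q = r ^ f)
    (hcard : Fintype.card F = q) (hq3 : q % 4 = 3)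
    {G : Type*} [Group G] [Finite G] (T : Subgroup G) [T.Normal]
    (eT : T ≃* PSL(2, F))
    (hcyc : IsCyclic (G ⧸ T)) (ho : Nat.card (G ⧸ T) ∣ f)
    (L : Subgroup G) (eL : L ≃* DihedralGroup ((q + 1) / 2)) :
    L ≤ T := by
  -- f is odd, since q = r^f ≡ 3 (mod 4) and squares are ≡ 0 or 1 (mod 4)
  have hf_odd : Odd f := by
    rcases Nat.even_or_odd f with he | hodd
    · exfalso
      obtain ⟨k, hk⟩ := he
      have hq' : q = (r ^ k) * (r ^ k) := by
        rw [hq, hk, ← pow_add]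
      rcases Nat.even_or_odd (r ^ k) with h2 | h2
      · obtain ⟨m, hm⟩ := h2
        have : q = 4 * (m * m) := by rw [hq', hm]; ring
        omega
      · obtain ⟨m, hm⟩ := h2
        have : q = 4 * (m * m) + 4 * m + 1 := by rw [hq', hm]; ring
        omega
    · exact hodd
  -- Nat.card (G ⧸ T) is odd
  have hodd_card : ¬ (2 ∣ Nat.card (G ⧸ T)) := by
    intro h2
    have : (2 : ℕ) ∣ f := h2.trans ho
    rw [Nat.odd_iff] at hf_odd
    omega
  -- any element of G ⧸ T of order dividing 2 is trivial
  have hkey : ∀ h : G ⧸ T, h ^ 2 = 1 → h = 1 := by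
    intro h hh
    have h1 : orderOf h ∣ 2 := orderOf_dvd_of_pow_eq_one hh
    have h2 : orderOf h ∣ Nat.card (G ⧸ T) := orderOf_dvd_natCard h
    rcases (Nat.dvd_prime Nat.prime_two).mp h1 with he | he
    · exact orderOf_eq_one_iff.mp he
    · exact absurd (he ▸ h2) hodd_card
  -- the composite map DihedralGroup → L → G → G ⧸ T
  set ψ : DihedralGroup ((q + 1) / 2) →* G ⧸ T :=
    (QuotientGroup.mk' T).comp (L.subtype.comp eL.symm.toMonoidHom) with hψ
  -- every reflection maps to 1
  have hsr : ∀ i, ψ (DihedralGroup.sr i) = 1 := by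
    intro i
    apply hkey
    rw [← _root_.map_pow]
    have : (DihedralGroup.sr i : DihedralGroup ((q + 1) / 2)) ^ 2 = 1 := by
      rw [sq, DihedralGroup.sr_mul_self]
    rw [this, _root_.map_one]
  -- hence ψ is trivial
  have hψ1 : ∀ g, ψ g = 1 := by
    intro g
    cases g with
    | r i =>
        have : (DihedralGroup.r i : DihedralGroup ((q + 1) / 2)) =
            DihedralGroup.sr 0 * DihedralGroup.sr i := by
          rw [DihedralGroup.sr_mul_sr, sub_zero]
        rw [this, _root_.map_mul, hsr, hsr, one_mul]
    | sr i => exact hsr i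
  -- conclude
  intro x hx
  have := hψ1 (eL ⟨x, hx⟩)
  rw [hψ] at this
  simp only [MonoidHom.comp_apply, MulEquiv.coe_toMonoidHom, MulEquiv.symm_apply_apply,
    Subgroup.coe_subtype] at this
  exact (QuotientGroup.eq_one_iff x).mp this
end

section
/- Let ⟨x⟩ be a cyclic group of order (q^d − 1)/(q − 1) with d ≥ 3 and q a prime power, and let G = ⟨x⟩ : ⟨δ⟩ with δ of order dividing d acting by x^δ = x^q. If a subgroup K with ⟨x⟩ < K ≤ G and |K : ⟨x⟩| = 2 is cyclic or dihedral, then a contradiction arises; that is, no subgroup K of G containing ⟨x⟩ with index 2 is cyclic or dihedral. -/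
/-!
An element `k ∈ K \ ⟨x⟩` can be written `x^a δ^j` with `0 < j < d`, so it conjugates `x` to
`x^(q^j)`. In a cyclic group conjugation fixes `x`, and in a dihedral group `D_n` every element of
order `n` is a rotation, which any element conjugates to itself or its inverse. Either way
`x^(q^j) = x^(±1)`, i.e. `n ∣ q^j ∓ 1`, which is impossible because `1 < q^j` and
`q^j + 1 < 1 + q + ⋯ + q^(d-1) = n` for `d ≥ 3`.
-/

open Subgroup

theorem DihedralGroup.conj_eq_or_eq_inv_of_orderOf_eq {n : ℕ} {g : DihedralGroup n}
    (hg : orderOf g = n) (h : DihedralGroup n) : h * g * h⁻¹ = g ∨ h * g * h⁻¹ = g⁻¹ := by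
  rcases g with i | i
  · rcases h with m | m
    · left; simp [add_comm]
    · right; simp [sub_eq_add_neg, add_comm]
  · -- a reflection has order `n` only for `n = 2`, where `D_2` is abelian
    rw [DihedralGroup.orderOf_sr] at hg
    subst hg
    revert h i
    decide

theorem conj_eq_or_eq_inv_of_isCyclic_or_dihedral {K : Type*} [Group K] {n : ℕ}
    (hK : IsCyclic K ∨ Nonempty (K ≃* DihedralGroup n)) {g : K} (hg : orderOf g = n) (h : K) :
    h * g * h⁻¹ = g ∨ h * g * h⁻¹ = g⁻¹ := by
  obtain hK | ⟨⟨ψ⟩⟩ := hK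
  · left
    let _ := hK.commGroup
    simp
  · have hψg : orderOf (ψ g) = n := by rw [MulEquiv.orderOf_eq, hg]
    simpa only [← map_inv, ← map_mul, ψ.injective.eq_iff] using
      DihedralGroup.conj_eq_or_eq_inv_of_orderOf_eq hψg (ψ h)

theorem pow_add_one_lt_sum_range_pow {q d j : ℕ} (hq : 2 ≤ q) (hd : 3 ≤ d) (hj : j < d) :
    q ^ j + 1 < ∑ i ∈ Finset.range d, q ^ i := by
  obtain ⟨i, hij, hi, hid⟩ : ∃ i, j ≠ i ∧ 1 ≤ i ∧ i < d :=
    ⟨if j = 1 then 2 else 1, by split_ifs <;> omega⟩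
  calc q ^ j + 1 < q ^ j + q ^ i := by
        have := Nat.one_lt_pow (by omega : i ≠ 0) (by omega : 1 < q)
        omega
    _ = ∑ k ∈ {j, i}, q ^ k := (Finset.sum_pair hij).symm
    _ ≤ ∑ k ∈ Finset.range d, q ^ k :=
        Finset.sum_le_sum_of_subset (by simp [Finset.insert_subset_iff, hj, hid])

section PowOrderOf

variable {G : Type*} [Group G] {x : G} {m : ℕ}

theorem pow_ne_self_of_lt (h1 : 1 < m) (h2 : m < orderOf x) : x ^ m ≠ x := by
  intro h
  have : m ≡ 1 [MOD orderOf x] := by rw [← pow_eq_pow_iff_modEq, h, pow_one]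
  exact absurd (this.eq_of_lt_of_lt h2 (by omega)) (by omega)

theorem pow_ne_inv_of_lt (h : m + 1 < orderOf x) : x ^ m ≠ x⁻¹ := by
  intro hm
  have : x ^ (m + 1) = 1 := by rw [pow_succ, hm, inv_mul_cancel]
  exact absurd (orderOf_le_of_pow_eq_one (by omega) this) (by omega)

end PowOrderOf

section Metacyclic

variable {G : Type*} [Group G] {x δ : G} {q : ℕ}

theorem pow_conj_eq_pow_pow (hconj : δ * x * δ⁻¹ = x ^ q) (j : ℕ) :
    δ ^ j * x * (δ ^ j)⁻¹ = x ^ q ^ j := by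
  induction j with
  | zero => simp
  | succ j ih =>
    rw [pow_succ', mul_inv_rev, show δ * δ ^ j * x * ((δ ^ j)⁻¹ * δ⁻¹)
      = δ * (δ ^ j * x * (δ ^ j)⁻¹) * δ⁻¹ by group, ih, ← conj_pow, hconj, ← pow_mul, ← pow_succ']

theorem zpow_mul_pow_conj_eq_pow_pow (hconj : δ * x * δ⁻¹ = x ^ q) (a : ℤ) (j : ℕ) :
    x ^ a * δ ^ j * x * (x ^ a * δ ^ j)⁻¹ = x ^ q ^ j := by
  rw [mul_inv_rev, show x ^ a * δ ^ j * x * ((δ ^ j)⁻¹ * (x ^ a)⁻¹)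
    = x ^ a * (δ ^ j * x * (δ ^ j)⁻¹) * (x ^ a)⁻¹ by group, pow_conj_eq_pow_pow hconj,
    (((Commute.refl x).zpow_left a).pow_right _).eq, mul_inv_cancel_right]

theorem zpowers_normal_of_conj_eq_pow (hconj : δ * x * δ⁻¹ = x ^ q) (hgen : closure {x, δ} = ⊤)
    (hx : IsOfFinOrder x) : (zpowers x).Normal := by
  have := hx.finite_zpowers.to_subtype
  rw [← normalizer_eq_top_iff, eq_top_iff, ← hgen, closure_le]
  rintro g (rfl | rfl)
  · exact le_normalizer (mem_zpowers g)
  · refine mem_normalizer_fintype fun y ⟨m, hm⟩ ↦ ⟨q * m, ?_⟩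
    rw [← hm, ← conj_zpow, hconj, ← zpow_natCast, ← zpow_mul]

theorem exists_eq_zpow_mul_pow (hconj : δ * x * δ⁻¹ = x ^ q) (hgen : closure {x, δ} = ⊤)
    (hx : IsOfFinOrder x) (hδ : IsOfFinOrder δ) (g : G) :
    ∃ a : ℤ, ∃ j < orderOf δ, g = x ^ a * δ ^ j := by
  classical
  have := zpowers_normal_of_conj_eq_pow hconj hgen hx
  rw [Set.insert_eq, Subgroup.closure_union, ← zpowers_eq_closure, ← zpowers_eq_closure] at hgen
  have hg : g ∈ ((zpowers x ⊔ zpowers δ : Subgroup G) : Set G) := hgen ▸ mem_top g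
  rw [normal_mul] at hg
  obtain ⟨_, ⟨a, rfl⟩, _, hv, rfl⟩ := hg
  obtain ⟨j, hj, rfl⟩ := Finset.mem_image.mp (hδ.mem_zpowers_iff_mem_range_orderOf.mp hv)
  exact ⟨a, j, Finset.mem_range.mp hj, rfl⟩

theorem exists_conj_eq_pow_pow_of_notMem_zpowers (hconj : δ * x * δ⁻¹ = x ^ q)
    (hgen : closure {x, δ} = ⊤) (hx : IsOfFinOrder x) (hδ : IsOfFinOrder δ) {g : G}
    (hg : g ∉ zpowers x) : ∃ j, 0 < j ∧ j < orderOf δ ∧ g * x * g⁻¹ = x ^ q ^ j := by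
  obtain ⟨a, j, hj, rfl⟩ := exists_eq_zpow_mul_pow hconj hgen hx hδ g
  refine ⟨j, Nat.pos_of_ne_zero ?_, hj, zpow_mul_pow_conj_eq_pow_pow hconj a j⟩
  rintro rfl
  exact hg (by simp)

end Metacyclic

theorem stmt14_general (q d : ℕ) (hq : 2 ≤ q) (hd : 3 ≤ d) (n : ℕ)
    (hn : n = ∑ j ∈ Finset.range d, q ^ j)
    {G : Type*} [Group G] (x δ : G)
    (hx : orderOf x = n) (hδ : orderOf δ ∣ d)
    (hconj : δ * x * δ⁻¹ = x ^ q)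
    (hgen : Subgroup.closure {x, δ} = ⊤)
    (K : Subgroup G) (hxK : Subgroup.zpowers x ≤ K)
    (hind : Nat.card K = 2 * n) :
    ¬ (IsCyclic K ∨ Nonempty (K ≃* DihedralGroup n)) := by
  intro hK
  have hlt (j : ℕ) (hj : j < d) : q ^ j + 1 < n := hn ▸ pow_add_one_lt_sum_range_pow hq hd hj
  have hn0 : 0 < n := by have := hlt 0 (by omega); omega
  have hxfin : IsOfFinOrder x := orderOf_pos_iff.mp (hx ▸ hn0)
  have hδfin : IsOfFinOrder δ := orderOf_pos_iff.mp (Nat.pos_of_dvd_of_pos hδ (by omega))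
  obtain ⟨k, hkK, hkx⟩ : ∃ k ∈ K, k ∉ zpowers x := by
    by_contra! hKx
    have := card_dvd_of_le hKx
    rw [hind, Nat.card_zpowers, hx] at this
    have := Nat.le_of_dvd hn0 this
    omega
  obtain ⟨j, hj0, hjδ, hconjk⟩ :=
    exists_conj_eq_pow_pow_of_notMem_zpowers hconj hgen hxfin hδfin hkx
  have hjd : j < d := hjδ.trans_le (Nat.le_of_dvd (by omega) hδ)
  rcases conj_eq_or_eq_inv_of_isCyclic_or_dihedral hK (g := ⟨x, hxK (mem_zpowers x)⟩)
    (by rw [orderOf_mk, hx]) ⟨k, hkK⟩ with h | h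
  · have h : k * x * k⁻¹ = x := congrArg Subtype.val h
    exact pow_ne_self_of_lt (Nat.one_lt_pow hj0.ne' (by omega))
      (hx ▸ (hlt j hjd).trans' (by omega)) (hconjk ▸ h)
  · have h : k * x * k⁻¹ = x⁻¹ := congrArg Subtype.val h
    exact pow_ne_inv_of_lt (hx ▸ hlt j hjd) (hconjk ▸ h)

/-- Let `n = (q^d - 1)/(q - 1) = q^{d-1} + ⋯ + q + 1` with `q ≥ 2` a prime power and
`d ≥ 3`, and let `G = ⟨x⟩ : ⟨δ⟩` where `x` has order `n`, `δ` has order dividing `d`,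
`δ` acts by `x^δ = x^q`, and `|G| = n·|⟨δ⟩|`. Then no subgroup `K` of `G` containing
`⟨x⟩` with index `|K : ⟨x⟩| = 2` is cyclic or dihedral. -/
theorem stmt14 (q d : ℕ) (hq : 2 ≤ q) (hd : 3 ≤ d) (n : ℕ)
    (hn : n = ∑ j ∈ Finset.range d, q ^ j)
    {G : Type*} [Group G] [Finite G] (x δ : G)
    (hx : orderOf x = n) (hδ : orderOf δ ∣ d)
    (hconj : δ * x * δ⁻¹ = x ^ q)
    (hgen : Subgroup.closure {x, δ} = ⊤)
    (hcardG : Nat.card G = n * orderOf δ)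
    (K : Subgroup G) (hxK : Subgroup.zpowers x ≤ K)
    (hind : Nat.card K = 2 * n) :
    ¬ (IsCyclic K ∨ Nonempty (K ≃* DihedralGroup n)) :=
  stmt14_general q d hq hd n hn x δ hx hδ hconj hgen K hxK hind
end

section
/- Let Γ be a connected (X,2)-distance transitive graph of girth 4 and valency r ≥ 3. If |Γ₂(u)| = r for some vertex u, then Γ is isomorphic to K_{r+1,r+1} minus a perfect matching. -/
open SimpleGraph

section Aux
variable {V : Type*} {Γ : SimpleGraph V}

lemma aux_iso_dist (hconn : Γ.Connected) (e : Γ ≃g Γ) (a b : V) :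
    Γ.dist (e a) (e b) = Γ.dist a b := by
  have key : ∀ (f : Γ ≃g Γ) (a b : V), Γ.dist (f a) (f b) ≤ Γ.dist a b := by
    intro f a b
    obtain ⟨p, hp⟩ := hconn.exists_walk_length_eq_dist a b
    calc Γ.dist (f a) (f b) ≤ (p.map f.toHom).length := Γ.dist_le _
      _ = p.length := Walk.length_map _ _
      _ = Γ.dist a b := hp
  refine le_antisymm (key e a b) ?_
  have := key e.symm (e a) (e b)
  simpa using this

lemma aux_triangle_free (hgirth : Γ.egirth = 4) :
    ∀ a b c : V, Γ.Adj a b → Γ.Adj b c → ¬ Γ.Adj a c := by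
  intro a b c hab hbc hac
  have h3 : ∃ (x : V) (w : Γ.Walk x x), w.IsCycle ∧ w.length = 3 := by
    rw [← is3Clique_iff_exists_cycle_length_three]
    classical
    exact ⟨{a, b, c}, is3Clique_triple_iff.mpr ⟨hab, hac, hbc⟩⟩
  obtain ⟨x, w, hw, hlen⟩ := h3
  have : Γ.egirth ≤ 3 := by
    have := le_egirth.mp (le_refl Γ.egirth) x w hw
    rw [hlen] at this
    exact_mod_cast this
  rw [hgirth] at this
  norm_num at this

lemma aux_dist_eq_two_iff (hconn : Γ.Connected) (a b : V) :
    Γ.dist a b = 2 ↔ a ≠ b ∧ ¬ Γ.Adj a b ∧ ∃ c, Γ.Adj a c ∧ Γ.Adj c b := by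
  constructor
  · intro h
    have hne : a ≠ b := by
      intro rfl1; rw [rfl1, SimpleGraph.dist_self] at h; omega
    have hnadj : ¬ Γ.Adj a b := by
      intro hadj
      rw [← SimpleGraph.dist_eq_one_iff_adj] at hadj
      omega
    refine ⟨hne, hnadj, ?_⟩
    obtain ⟨p, hp⟩ := hconn.exists_walk_length_eq_dist a b
    rw [h] at hp
    cases p with
    | nil => simp at hp
    | cons hac q =>
      cases q with
      | nil => simp at hp
      | cons hcd q2 =>
        cases q2 with
        | nil => exact ⟨_, hac, hcd⟩
        | cons h5 q3 => simp [Walk.length_cons] at hp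
  · rintro ⟨hne, hnadj, c, h1, h2⟩
    have hle : Γ.dist a b ≤ 2 := by
      have := Γ.dist_le (Walk.cons h1 (Walk.cons h2 Walk.nil))
      simpa using this
    have h0 : Γ.dist a b ≠ 0 := by
      intro h0; exact hne (hconn.dist_eq_zero_iff.mp h0)
    have h1' : Γ.dist a b ≠ 1 := by
      intro h1'; exact hnadj (SimpleGraph.dist_eq_one_iff_adj.mp h1')
    omega

end Aux


lemma cbm_adj_inl_inr {R : ℕ} (i j : Fin R) :
    (completeBipartiteMinusMatching R).Adj (Sum.inl i) (Sum.inr j) ↔ i ≠ j := by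
  simp only [completeBipartiteMinusMatching, fromRel_adj]
  constructor
  · rintro ⟨hne, h | h⟩
    · obtain ⟨i', j', hij, hi, hj⟩ := h
      cases hi; cases hj; simpa using hij
    · obtain ⟨i', j', hij, hi, hj⟩ := h
      simp at hi
  · intro h
    exact ⟨by simp, Or.inl ⟨i, j, h, rfl, rfl⟩⟩

lemma cbm_adj_inr_inl {R : ℕ} (i j : Fin R) :
    (completeBipartiteMinusMatching R).Adj (Sum.inr i) (Sum.inl j) ↔ j ≠ i := by
  rw [(completeBipartiteMinusMatching R).adj_comm]
  exact cbm_adj_inl_inr j i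

lemma cbm_adj_inl_inl {R : ℕ} (i j : Fin R) :
    ¬ (completeBipartiteMinusMatching R).Adj (Sum.inl i) (Sum.inl j) := by
  simp only [completeBipartiteMinusMatching, fromRel_adj]
  rintro ⟨hne, h | h⟩ <;> obtain ⟨i', j', hij, hi, hj⟩ := h <;> simp_all

lemma cbm_adj_inr_inr {R : ℕ} (i j : Fin R) :
    ¬ (completeBipartiteMinusMatching R).Adj (Sum.inr i) (Sum.inr j) := by
  simp only [completeBipartiteMinusMatching, fromRel_adj]
  rintro ⟨hne, h | h⟩ <;> obtain ⟨i', j', hij, hi, hj⟩ := h <;> simp_all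

/-- A connected `(X,2)`-distance transitive graph of girth 4 and valency `r ≥ 3` with
`|Γ₂(u)| = r` for some vertex `u` is isomorphic to `K_{r+1,r+1}` minus a perfect
matching. -/
theorem stmt15 {V : Type*} [Fintype V] (Γ : SimpleGraph V) [DecidableRel Γ.Adj]
    (hconn : Γ.Connected) (hgirth : Γ.egirth = 4)
    (r : ℕ) (hr : 3 ≤ r) (hreg : ∀ v : V, Γ.degree v = r)
    (X : Subgroup (Γ ≃g Γ))
    (hvt : ∀ u v : V, ∃ x ∈ X, x u = v)
    (hdt : ∀ i ∈ ({1, 2} : Set ℕ), ∀ u v w : V, Γ.dist u v = i → Γ.dist u w = i →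
      ∃ x ∈ X, x u = u ∧ x v = w)
    (u : V) (hu : {w : V | Γ.dist u w = 2}.ncard = r) :
    Nonempty (Γ ≃g completeBipartiteMinusMatching (r + 1)) := by
  classical
  have hΔ := aux_triangle_free hgirth
  have hd2 := aux_dist_eq_two_iff (Γ := Γ) hconn
  have hdist : ∀ (x : Γ ≃g Γ) (a b : V), Γ.dist (x a) (x b) = Γ.dist a b :=
    fun x => aux_iso_dist hconn x
  -- the two spheres around u
  set N : Finset V := Γ.neighborFinset u with hNdef
  have hnfcard : ∀ v : V, (Γ.neighborFinset v).card = r := by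
    intro v; rw [Γ.card_neighborFinset_eq_degree]; exact hreg v
  have hN : N.card = r := hnfcard u
  set S : Finset V := Finset.univ.filter (fun w => Γ.dist u w = 2) with hSdef
  have hS : S.card = r := by
    have hScoe : {w : V | Γ.dist u w = 2} = ↑S := by ext w; simp [hSdef]
    rw [← hu, hScoe, Set.ncard_coe_finset]
  have hmemN : ∀ v, v ∈ N ↔ Γ.Adj u v := by intro v; simp [hNdef]
  have hmemS : ∀ w, w ∈ S ↔ Γ.dist u w = 2 := by intro w; simp [hSdef]
  have huN : u ∉ N := by simp [hmemN]
  have huS : u ∉ S := by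
    intro h
    have := (hmemS u).mp h
    rw [SimpleGraph.dist_self] at this
    omega
  have hSnadj : ∀ w ∈ S, ¬ Γ.Adj u w := by
    intro w hw
    exact ((hd2 u w).mp ((hmemS w).mp hw)).2.1
  have hSne : ∀ w ∈ S, w ≠ u := by
    intro w hw
    exact fun h => (((hd2 u w).mp ((hmemS w).mp hw)).1 h.symm)
  have hNS : ∀ v ∈ N, v ∉ S := by
    intro v hv hvS
    exact hSnadj v hvS ((hmemN v).mp hv)
  -- the second sphere around any vertex has r elements
  have hS2 : ∀ v : V, (Finset.univ.filter (fun w => Γ.dist v w = 2)).card = r := by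
    intro v
    obtain ⟨x, hxX, hx⟩ := hvt u v
    rw [← hS]
    apply Finset.card_bij' (fun w _ => x.symm w) (fun w _ => x w)
    · intro a ha
      simp only [Finset.mem_filter, Finset.mem_univ, true_and] at ha
      have h1 := hdist x u (x.symm a)
      rw [hx, RelIso.apply_symm_apply] at h1
      rw [hmemS, ← h1]
      exact ha
    · intro a ha
      simp only [Finset.mem_filter, Finset.mem_univ, true_and]
      have h1 := hdist x u a
      rw [hx] at h1
      rw [h1]
      exact (hmemS a).mp ha
    · intro a ha; simp
    · intro a ha; simp
  -- N-independence
  have hNind : ∀ v ∈ N, ∀ v' ∈ N, ¬ Γ.Adj v v' := by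
    intro v hv v' hv' hadj
    exact hΔ v u v' (Γ.adj_symm ((hmemN v).mp hv)) ((hmemN v').mp hv') hadj
  -- neighbours of a vertex of N
  set A : V → Finset V := fun v => S.filter (fun w => Γ.Adj v w) with hAdef
  set B : V → Finset V := fun w => N.filter (fun v => Γ.Adj v w) with hBdef
  have hnfN : ∀ v ∈ N, Γ.neighborFinset v = insert u (A v) := by
    intro v hv
    ext w
    simp only [mem_neighborFinset, Finset.mem_insert, hAdef, Finset.mem_filter, hmemS]
    constructor
    · intro hvw
      by_cases hwu : w = u
      · exact Or.inl hwu
      · refine Or.inr ⟨(hd2 u w).mpr ⟨fun h => hwu h.symm, ?_, v, (hmemN v).mp hv, hvw⟩, hvw⟩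
        exact hΔ u v w ((hmemN v).mp hv) hvw
    · rintro (rfl | ⟨hw, hvw⟩)
      · exact ((hmemN v).mp hv).symm
      · exact hvw
  have hAcard : ∀ v ∈ N, (A v).card = r - 1 := by
    intro v hv
    have huA : u ∉ A v := fun h => huS (Finset.mem_filter.mp h).1
    have h1 : r = (insert u (A v)).card := by rw [← hnfN v hv, hnfcard]
    rw [Finset.card_insert_of_notMem huA] at h1
    omega
  have hAS : ∀ v, A v ⊆ S := fun v => Finset.filter_subset _ _
  have hBN : ∀ w, B w ⊆ N := fun w => Finset.filter_subset _ _
  -- |B w| = r - 1 for w ∈ S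
  have hBconst : ∀ w ∈ S, ∀ w' ∈ S, (B w).card = (B w').card := by
    intro w hw w' hw'
    obtain ⟨x, hxX, hxu, hxw⟩ :=
      hdt 2 (by simp) u w w' ((hmemS w).mp hw) ((hmemS w').mp hw')
    apply Finset.card_bij' (fun v _ => x v) (fun v _ => x.symm v)
    · intro a ha
      simp only [hBdef, Finset.mem_filter, hmemN] at ha ⊢
      constructor
      · have h1 : Γ.Adj (x u) (x a) := x.map_rel_iff.mpr ha.1
        rwa [hxu] at h1
      · have h2 : Γ.Adj (x a) (x w) := x.map_rel_iff.mpr ha.2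
        rwa [hxw] at h2
    · intro a ha
      simp only [hBdef, Finset.mem_filter, hmemN] at ha ⊢
      constructor
      · have h1 : Γ.Adj (x u) (x (x.symm a)) := by
          rw [hxu, RelIso.apply_symm_apply]; exact ha.1
        exact x.map_rel_iff.mp h1
      · have h2 : Γ.Adj (x (x.symm a)) (x w) := by
          rw [RelIso.apply_symm_apply, hxw]; exact ha.2
        exact x.map_rel_iff.mp h2
    · intro a ha; simp
    · intro a ha; simp
  obtain ⟨w₀, hw₀⟩ := Finset.card_pos.mp (by rw [hS]; omega : 0 < S.card)
  have hsum : ∑ v ∈ N, (A v).card = ∑ w ∈ S, (B w).card := by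
    simp only [hAdef, hBdef, Finset.card_filter]
    exact Finset.sum_comm
  have hBcard : ∀ w ∈ S, (B w).card = r - 1 := by
    have h1 : ∑ v ∈ N, (A v).card = r * (r - 1) := by
      rw [Finset.sum_congr rfl (fun v hv => hAcard v hv), Finset.sum_const, smul_eq_mul, hN]
    have h2 : ∑ w ∈ S, (B w).card = r * (B w₀).card := by
      rw [Finset.sum_congr rfl (fun w hw => hBconst w hw w₀ hw₀), Finset.sum_const,
        smul_eq_mul, hS]
    have h3 : (B w₀).card = r - 1 := by
      have := hsum
      rw [h1, h2] at this
      exact (Nat.eq_of_mul_eq_mul_left (by omega) this.symm)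
    intro w hw
    rw [hBconst w hw w₀ hw₀, h3]
  -- S is independent
  have hSind : ∀ w ∈ S, ∀ w' ∈ S, ¬ Γ.Adj w w' := by
    intro w hw w' hw' hadj
    have hdisj : Disjoint (B w) (B w') := by
      rw [Finset.disjoint_left]
      intro v hv hv'
      exact hΔ v w w' (Finset.mem_filter.mp hv).2 hadj (Finset.mem_filter.mp hv').2
    have hun : (B w ∪ B w').card ≤ r := by
      rw [← hN]
      exact Finset.card_le_card (Finset.union_subset (hBN w) (hBN w'))
    rw [Finset.card_union_of_disjoint hdisj, hBcard w hw, hBcard w' hw'] at hun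
    omega
  -- the extra neighbour of w ∈ S
  have hzex : ∀ w : V, ∃ zw : V, w ∈ S → Γ.neighborFinset w \ N = {zw} := by
    intro w
    by_cases hw : w ∈ S
    · have hBi : Γ.neighborFinset w ∩ N = B w := by
        ext v
        simp only [Finset.mem_inter, mem_neighborFinset, hBdef, Finset.mem_filter]
        constructor
        · rintro ⟨h1, h2⟩; exact ⟨h2, h1.symm⟩
        · rintro ⟨h1, h2⟩; exact ⟨h2.symm, h1⟩
      have hc : (Γ.neighborFinset w \ N).card = 1 := by
        have := Finset.card_sdiff_add_card_inter (Γ.neighborFinset w) N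
        rw [hBi, hBcard w hw, hnfcard w] at this
        omega
      obtain ⟨zw, hzw⟩ := Finset.card_eq_one.mp hc
      exact ⟨zw, fun _ => hzw⟩
    · exact ⟨u, fun h => absurd h hw⟩
  choose z hz using hzex
  have hzadj : ∀ w ∈ S, Γ.Adj w (z w) := by
    intro w hw
    have : z w ∈ Γ.neighborFinset w \ N := by rw [hz w hw]; simp
    exact (mem_neighborFinset _ _ _).mp (Finset.mem_sdiff.mp this).1
  have hzN : ∀ w ∈ S, z w ∉ N := by
    intro w hw
    have : z w ∈ Γ.neighborFinset w \ N := by rw [hz w hw]; simp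
    exact (Finset.mem_sdiff.mp this).2
  have hzu : ∀ w ∈ S, z w ≠ u := by
    intro w hw h
    exact hSnadj w hw (h ▸ (hzadj w hw)).symm
  have hzS : ∀ w ∈ S, z w ∉ S := by
    intro w hw h
    exact hSind w hw (z w) h (hzadj w hw)
  have hz3 : ∀ w ∈ S, ∀ v ∈ N, ¬ Γ.Adj v (z w) := by
    intro w hw v hv hadj
    apply hzS w hw
    rw [hmemS, hd2]
    exact ⟨fun h => hzu w hw h.symm, fun h => hzN w hw ((hmemN _).mpr h), v, (hmemN v).mp hv, hadj⟩
  -- all extra neighbours coincide locally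
  have hzkey : ∀ v ∈ N, ∀ w ∈ A v, ∀ w' ∈ A v, z w = z w' := by
    intro v hv w hw w' hw'
    by_contra hne
    have hwS : w ∈ S := hAS v hw
    have hw'S : w' ∈ S := hAS v hw'
    have hvw : Γ.Adj v w := (Finset.mem_filter.mp hw).2
    have hvw' : Γ.Adj v w' := (Finset.mem_filter.mp hw').2
    have hzdist : ∀ y ∈ A v, Γ.dist v (z y) = 2 := by
      intro y hy
      have hyS : y ∈ S := hAS v hy
      rw [hd2]
      exact ⟨fun h => hzN y hyS (h ▸ hv), fun h => hz3 y hyS v hv h,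
        y, (Finset.mem_filter.mp hy).2, hzadj y hyS⟩
    have hsub : insert (z w) (insert (z w') (N.erase v)) ⊆
        Finset.univ.filter (fun y => Γ.dist v y = 2) := by
      intro a ha
      simp only [Finset.mem_insert, Finset.mem_erase] at ha
      simp only [Finset.mem_filter, Finset.mem_univ, true_and]
      rcases ha with rfl | rfl | ⟨hav, haN⟩
      · exact hzdist w hw
      · exact hzdist w' hw'
      · rw [hd2]
        exact ⟨fun h => hav h.symm, fun h => hNind v hv a haN h,
          u, (Γ.adj_symm ((hmemN v).mp hv)), (hmemN a).mp haN⟩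
    have hc1 : (insert (z w) (insert (z w') (N.erase v))).card = r + 1 := by
      rw [Finset.card_insert_of_notMem, Finset.card_insert_of_notMem,
        Finset.card_erase_of_mem hv, hN]
      · omega
      · intro h
        exact hzN w' hw'S (Finset.mem_of_mem_erase h)
      · intro h
        simp only [Finset.mem_insert] at h
        rcases h with h | h
        · exact hne h
        · exact hzN w hwS (Finset.mem_of_mem_erase h)
    have := Finset.card_le_card hsub
    rw [hc1, hS2 v] at this
    omega
  -- global z
  set z0 : V := z w₀ with hz0def
  have hzall : ∀ w ∈ S, z w = z0 := by
    intro w hw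
    by_cases hww : w = w₀
    · rw [hww]
    · -- find a common neighbour of w and w₀ in N
      have hint : 1 ≤ (B w ∩ B w₀).card := by
        have h1 := Finset.card_inter_add_card_union (B w) (B w₀)
        have h2 : (B w ∪ B w₀).card ≤ r := by
          rw [← hN]
          exact Finset.card_le_card (Finset.union_subset (hBN w) (hBN w₀))
        rw [hBcard w hw, hBcard w₀ hw₀] at h1
        omega
      obtain ⟨v, hv⟩ := Finset.card_pos.mp (by omega : 0 < (B w ∩ B w₀).card)
      obtain ⟨hv1, hv2⟩ := Finset.mem_inter.mp hv
      have hvN : v ∈ N := hBN w hv1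
      have hwA : w ∈ A v := Finset.mem_filter.mpr ⟨hw, (Finset.mem_filter.mp hv1).2⟩
      have hw₀A : w₀ ∈ A v := Finset.mem_filter.mpr ⟨hw₀, (Finset.mem_filter.mp hv2).2⟩
      exact hzkey v hvN w hwA w₀ hw₀A
  have hz0S : z0 ∉ S := hzS w₀ hw₀
  have hz0N : z0 ∉ N := hzN w₀ hw₀
  have hz0u : z0 ≠ u := hzu w₀ hw₀
  -- neighbourhood of z0 is S
  have hz0nf : Γ.neighborFinset z0 = S := by
    have hsub : S ⊆ Γ.neighborFinset z0 := by
      intro w hw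
      rw [mem_neighborFinset]
      have := hzadj w hw
      rw [hzall w hw] at this
      exact this.symm
    exact (Finset.eq_of_subset_of_card_le hsub (by rw [hnfcard, hS])).symm
  -- neighbours of S-vertices are in N ∪ {z0}
  have hnbrS : ∀ w ∈ S, ∀ a, Γ.Adj w a → a ∈ N ∨ a = z0 := by
    intro w hw a ha
    by_cases haN : a ∈ N
    · exact Or.inl haN
    · right
      have : a ∈ Γ.neighborFinset w \ N :=
        Finset.mem_sdiff.mpr ⟨(mem_neighborFinset _ _ _).mpr ha, haN⟩
      rw [hz w hw, Finset.mem_singleton] at this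
      rw [this, hzall w hw]
  -- every vertex is u, in N, in S, or z0
  have hT : ∀ a : V, a = u ∨ a ∈ N ∨ a ∈ S ∨ a = z0 := by
    have hcl : ∀ a b : V, (a = u ∨ a ∈ N ∨ a ∈ S ∨ a = z0) → Γ.Adj a b →
        (b = u ∨ b ∈ N ∨ b ∈ S ∨ b = z0) := by
      intro a b ha hab
      rcases ha with rfl | ha | ha | rfl
      · exact Or.inr (Or.inl ((hmemN b).mpr hab))
      · have : b ∈ Γ.neighborFinset a := (mem_neighborFinset _ _ _).mpr hab
        rw [hnfN a ha, Finset.mem_insert] at this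
        rcases this with rfl | hbA
        · exact Or.inl rfl
        · exact Or.inr (Or.inr (Or.inl (hAS a hbA)))
      · rcases hnbrS a ha b hab with h | h
        · exact Or.inr (Or.inl h)
        · exact Or.inr (Or.inr (Or.inr h))
      · have : b ∈ Γ.neighborFinset z0 := (mem_neighborFinset _ _ _).mpr hab
        rw [hz0nf] at this
        exact Or.inr (Or.inr (Or.inl this))
    have key : ∀ (a c : V) (p : Γ.Walk a c),
        (a = u ∨ a ∈ N ∨ a ∈ S ∨ a = z0) → (c = u ∨ c ∈ N ∨ c ∈ S ∨ c = z0) := by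
      intro a c p
      induction p with
      | nil => exact id
      | cons h q ih => exact fun ha => ih (hcl _ _ ha h)
    intro a
    exact key u a (hconn u a).some (Or.inl rfl)
  -- cardinality of V
  have hcardV : Fintype.card V = 2 * r + 2 := by
    have huniv : (Finset.univ : Finset V) = insert u (insert z0 (N ∪ S)) := by
      ext a
      simp only [Finset.mem_univ, true_iff, Finset.mem_insert, Finset.mem_union]
      rcases hT a with h | h | h | h
      · exact Or.inl h
      · exact Or.inr (Or.inr (Or.inl h))
      · exact Or.inr (Or.inr (Or.inr h))
      · exact Or.inr (Or.inl h)
    rw [← Finset.card_univ, huniv]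
    rw [Finset.card_insert_of_notMem, Finset.card_insert_of_notMem,
      Finset.card_union_of_disjoint, hN, hS]
    · omega
    · rw [Finset.disjoint_left]; exact fun a ha => hNS a ha
    · simp only [Finset.mem_union]; tauto
    · simp only [Finset.mem_insert, Finset.mem_union]
      push_neg
      exact ⟨Ne.symm hz0u, huN, huS⟩
  -- the unique non-neighbour in N of w ∈ S
  have hMBex : ∀ w : V, ∃ v : V, w ∈ S → N \ B w = {v} := by
    intro w
    by_cases hw : w ∈ S
    · have hc : (N \ B w).card = 1 := by
        have := Finset.card_sdiff_add_card_inter N (B w)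
        have hi : N ∩ B w = B w := Finset.inter_eq_right.mpr (hBN w)
        rw [hi, hBcard w hw, hN] at this
        omega
      obtain ⟨v, hv⟩ := Finset.card_eq_one.mp hc
      exact ⟨v, fun _ => hv⟩
    · exact ⟨u, fun h => absurd h hw⟩
  choose MB hMB using hMBex
  have hMBN : ∀ w ∈ S, MB w ∈ N := by
    intro w hw
    have : MB w ∈ N \ B w := by rw [hMB w hw]; simp
    exact (Finset.mem_sdiff.mp this).1
  have hMBnadj : ∀ w ∈ S, ¬ Γ.Adj (MB w) w := by
    intro w hw h
    have h1 : MB w ∈ N \ B w := by rw [hMB w hw]; simp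
    exact (Finset.mem_sdiff.mp h1).2 (Finset.mem_filter.mpr ⟨(Finset.mem_sdiff.mp h1).1, h⟩)
  have hAdjNS : ∀ v ∈ N, ∀ w ∈ S, (Γ.Adj v w ↔ v ≠ MB w) := by
    intro v hv w hw
    constructor
    · intro h hvm
      exact hMBnadj w hw (hvm ▸ h)
    · intro h
      by_contra hnadj
      have : v ∈ N \ B w := Finset.mem_sdiff.mpr
        ⟨hv, fun hB => hnadj (Finset.mem_filter.mp hB).2⟩
      rw [hMB w hw, Finset.mem_singleton] at this
      exact h this
  have hMBinj : ∀ w ∈ S, ∀ w' ∈ S, MB w = MB w' → w = w' := by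
    intro w hw w' hw' h
    have hv : MB w ∈ N := hMBN w hw
    have hmx : (S \ A (MB w)).card = 1 := by
      have := Finset.card_sdiff_add_card_inter S (A (MB w))
      have hi : S ∩ A (MB w) = A (MB w) := Finset.inter_eq_right.mpr (hAS (MB w))
      rw [hi, hAcard (MB w) hv, hS] at this
      omega
    obtain ⟨y, hy⟩ := Finset.card_eq_one.mp hmx
    have hwy : w ∈ S \ A (MB w) := Finset.mem_sdiff.mpr
      ⟨hw, fun hA => hMBnadj w hw (Finset.mem_filter.mp hA).2⟩
    have hw'y : w' ∈ S \ A (MB w) := by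
      rw [h]
      exact Finset.mem_sdiff.mpr
        ⟨hw', fun hA => hMBnadj w' hw' (Finset.mem_filter.mp hA).2⟩
    rw [hy, Finset.mem_singleton] at hwy hw'y
    rw [hwy, hw'y]
  -- the equivalence
  have hNcard : Fintype.card ↥N = r := by rw [Fintype.card_coe, hN]
  set e : ↥N ≃ Fin r := Fintype.equivFinOfCardEq hNcard with hedef
  set f : V → (Fin (r+1) ⊕ Fin (r+1)) := fun a =>
    if a = u then Sum.inl 0
    else if h : a ∈ N then Sum.inr (e ⟨a, h⟩).succ
    else if h : a ∈ S then Sum.inl (e ⟨MB a, hMBN a h⟩).succ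
    else Sum.inr 0 with hfdef
  have hfu : f u = Sum.inl 0 := by rw [hfdef]; simp
  have hfN : ∀ (a : V) (h : a ∈ N), f a = Sum.inr (e ⟨a, h⟩).succ := by
    intro a h
    rw [hfdef]
    simp only
    rw [if_neg (by intro h'; subst h'; exact huN h), dif_pos h]
  have hfS : ∀ (a : V) (h : a ∈ S), f a = Sum.inl (e ⟨MB a, hMBN a h⟩).succ := by
    intro a h
    rw [hfdef]
    simp only
    rw [if_neg (by intro h'; subst h'; exact huS h), dif_neg (fun h' => hNS a h' h), dif_pos h]
  have hfz : f z0 = Sum.inr 0 := by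
    rw [hfdef]
    simp only
    rw [if_neg hz0u, dif_neg hz0N, dif_neg hz0S]
  -- injectivity
  have hinj : Function.Injective f := by
    intro a b hab
    rcases hT a with rfl | ha | ha | rfl <;> rcases hT b with rfl | hb | hb | rfl
    · rfl
    · rw [hfu, hfN b hb] at hab; exact absurd hab (by simp)
    · rw [hfu, hfS b hb] at hab
      exact absurd hab (by simp [(Fin.succ_ne_zero _).symm])
    · rw [hfu, hfz] at hab; exact absurd hab (by simp)
    · rw [hfu, hfN a ha] at hab; exact absurd hab (by simp)
    · rw [hfN a ha, hfN b hb] at hab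
      simp only [Sum.inr.injEq] at hab
      have := e.injective (Fin.succ_injective _ hab)
      exact congrArg Subtype.val this
    · rw [hfN a ha, hfS b hb] at hab; exact absurd hab (by simp)
    · rw [hfN a ha, hfz] at hab
      simp only [Sum.inr.injEq] at hab
      exact absurd hab (Fin.succ_ne_zero _)
    · rw [hfS a ha, hfu] at hab
      exact absurd hab (by simp [Fin.succ_ne_zero])
    · rw [hfS a ha, hfN b hb] at hab; exact absurd hab (by simp)
    · rw [hfS a ha, hfS b hb] at hab
      simp only [Sum.inl.injEq] at hab
      have := e.injective (Fin.succ_injective _ hab)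
      have hMBeq : MB a = MB b := congrArg Subtype.val this
      exact hMBinj a ha b hb hMBeq
    · rw [hfS a ha, hfz] at hab; exact absurd hab (by simp)
    · rw [hfz, hfu] at hab; exact absurd hab (by simp)
    · rw [hfz, hfN b hb] at hab
      simp only [Sum.inr.injEq] at hab
      exact absurd hab.symm (Fin.succ_ne_zero _)
    · rw [hfz, hfS b hb] at hab; exact absurd hab (by simp)
    · rfl
  have hbij : Function.Bijective f := by
    rw [Fintype.bijective_iff_injective_and_card]
    refine ⟨hinj, ?_⟩
    rw [hcardV, Fintype.card_sum, Fintype.card_fin]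
    ring
  -- adjacency facts
  have hadjuN : ∀ v ∈ N, Γ.Adj u v := fun v hv => (hmemN v).mp hv
  have hadjSz : ∀ w ∈ S, Γ.Adj w z0 := by
    intro w hw
    have := hzadj w hw
    rwa [hzall w hw] at this
  have hnadjNz : ∀ v ∈ N, ¬ Γ.Adj v z0 := fun v hv => hz3 w₀ hw₀ v hv
  have hnadjuz : ¬ Γ.Adj u z0 := fun h => hz0N ((hmemN z0).mpr h)
  -- main adjacency equivalence
  have hmri : ∀ a b : V, (completeBipartiteMinusMatching (r+1)).Adj (f a) (f b) ↔ Γ.Adj a b := by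
    intro a b
    rcases hT a with rfl | ha | ha | rfl <;> rcases hT b with rfl | hb | hb | rfl
    · rw [hfu]
      exact iff_of_false (cbm_adj_inl_inl _ _) (Γ.irrefl)
    · rw [hfu, hfN b hb, cbm_adj_inl_inr]
      exact iff_of_true (Fin.succ_ne_zero _).symm (hadjuN b hb)
    · rw [hfu, hfS b hb]
      exact iff_of_false (cbm_adj_inl_inl _ _) (hSnadj b hb)
    · rw [hfu, hfz, cbm_adj_inl_inr]
      exact iff_of_false (by simp) hnadjuz
    · rw [hfN a ha, hfu, cbm_adj_inr_inl]
      exact iff_of_true (Fin.succ_ne_zero _).symm (hadjuN a ha).symm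
    · rw [hfN a ha, hfN b hb]
      exact iff_of_false (cbm_adj_inr_inr _ _) (hNind a ha b hb)
    · rw [hfN a ha, hfS b hb, cbm_adj_inr_inl, hAdjNS a ha b hb]
      constructor
      · intro hne h
        subst h
        exact hne rfl
      · intro hne h
        apply hne
        have h2 := e.injective (Fin.succ_injective _ h)
        exact (congrArg Subtype.val h2).symm
    · rw [hfN a ha, hfz]
      exact iff_of_false (cbm_adj_inr_inr _ _) (hnadjNz a ha)
    · rw [hfS a ha, hfu]
      exact iff_of_false (cbm_adj_inl_inl _ _) (fun h => hSnadj a ha h.symm)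
    · rw [hfS a ha, hfN b hb, cbm_adj_inl_inr, Γ.adj_comm, hAdjNS b hb a ha]
      constructor
      · intro hne h
        subst h
        exact hne rfl
      · intro hne h
        apply hne
        have h2 := e.injective (Fin.succ_injective _ h)
        exact (congrArg Subtype.val h2).symm
    · rw [hfS a ha, hfS b hb]
      exact iff_of_false (cbm_adj_inl_inl _ _) (hSind a ha b hb)
    · rw [hfS a ha, hfz, cbm_adj_inl_inr]
      exact iff_of_true (Fin.succ_ne_zero _) (hadjSz a ha)
    · rw [hfz, hfu, cbm_adj_inr_inl]
      exact iff_of_false (by simp) (fun h => hnadjuz h.symm)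
    · rw [hfz, hfN b hb]
      exact iff_of_false (cbm_adj_inr_inr _ _) (fun h => hnadjNz b hb h.symm)
    · rw [hfz, hfS b hb, cbm_adj_inr_inl]
      exact iff_of_true (Fin.succ_ne_zero _) ((hadjSz b hb).symm)
    · rw [hfz]
      exact iff_of_false (cbm_adj_inr_inr _ _) (Γ.irrefl)
  exact ⟨⟨Equiv.ofBijective f hbij, fun {a b} => hmri a b⟩⟩
end

section
/- Let X ≤ Aut(K_{n,n}) act on the complete bipartite graph K_{n,n}. Then K_{n,n} is (X,2)-distance transitive if and only if it is (X,2)-arc transitive. -/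
open SimpleGraph MulAction

instance grIsoMulAction {V : Type*} {G : SimpleGraph V} : MulAction (G ≃g G) V where
  smul g v := g v
  one_smul _ := rfl
  mul_smul _ _ _ := rfl

lemma pair_orbit {G α β : Type*} [Group G] [Finite G] [MulAction G α] [MulAction G β]
    {a c : α} {b d : β} (hc : c ∈ orbit G a) (hd : d ∈ orbit G b)
    (hcop : Nat.Coprime (stabilizer G a).index (stabilizer G b).index) :
    ∃ g : G, g • a = c ∧ g • b = d := by
  have hstab : stabilizer G (a, b) = stabilizer G a ⊓ stabilizer G b := by
    ext g
    simp [mem_stabilizer_iff, Prod.ext_iff]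
  have h1 : (stabilizer G a).index ∣ (stabilizer G (a, b)).index :=
    Subgroup.index_dvd_of_le (by rw [hstab]; exact inf_le_left)
  have h2 : (stabilizer G b).index ∣ (stabilizer G (a, b)).index :=
    Subgroup.index_dvd_of_le (by rw [hstab]; exact inf_le_right)
  have hdvd := hcop.mul_dvd_of_dvd_of_dvd h1 h2
  have hsub : orbit G (a, b) ⊆ (orbit G a) ×ˢ (orbit G b) := by
    rintro ⟨x, y⟩ ⟨g, hg⟩
    obtain ⟨h1', h2'⟩ := Prod.ext_iff.mp hg
    exact ⟨⟨g, h1'⟩, ⟨g, h2'⟩⟩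
  have hfina : (orbit G a).Finite := Set.finite_range _
  have hfinb : (orbit G b).Finite := Set.finite_range _
  have hprod_fin : ((orbit G a) ×ˢ (orbit G b)).Finite := hfina.prod hfinb
  have hcard_prod : ((orbit G a) ×ˢ (orbit G b)).ncard
      = (orbit G a).ncard * (orbit G b).ncard := by
    have h := Nat.card_congr (Equiv.Set.prod (orbit G a) (orbit G b))
    rw [Nat.card_prod] at h
    simpa [Nat.card_coe_set_eq] using h
  have hkey : orbit G (a, b) = (orbit G a) ×ˢ (orbit G b) := by
    refine Set.eq_of_subset_of_ncard_le hsub ?_ hprod_fin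
    have hfinab : (orbit G (a, b)).Finite := Set.finite_range _
    have hpos : 0 < (orbit G (a, b)).ncard := by
      rw [Set.ncard_pos hfinab]
      exact ⟨(a, b), mem_orbit_self _⟩
    calc ((orbit G a) ×ˢ (orbit G b)).ncard
        = (stabilizer G a).index * (stabilizer G b).index := by
          rw [hcard_prod, index_stabilizer, index_stabilizer]
      _ ≤ (orbit G (a, b)).ncard := by
          refine Nat.le_of_dvd hpos ?_
          rwa [← index_stabilizer]
  have hmem : (c, d) ∈ orbit G (a, b) := by
    rw [hkey]; exact Set.mem_prod.mpr ⟨hc, hd⟩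
  obtain ⟨g, hg⟩ := hmem
  exact ⟨g, (Prod.ext_iff.mp hg).1, (Prod.ext_iff.mp hg).2⟩

section Bip

variable {n : ℕ}


lemma bcb_not_adj_of_adj_adj {u v w : Fin n ⊕ Fin n}
    (h1 : (completeBipartiteGraph (Fin n) (Fin n)).Adj u v) (h2 : (completeBipartiteGraph (Fin n) (Fin n)).Adj v w) : ¬ (completeBipartiteGraph (Fin n) (Fin n)).Adj u w := by
  cases u <;> cases v <;> cases w <;> simp_all [completeBipartiteGraph]

lemma bcb_dist_eq_two {u v : Fin n ⊕ Fin n} :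
    (completeBipartiteGraph (Fin n) (Fin n)).dist u v = 2 ↔ u ≠ v ∧ ¬ (completeBipartiteGraph (Fin n) (Fin n)).Adj u v := by
  constructor
  · intro h
    refine ⟨?_, ?_⟩
    · rintro rfl; simp [SimpleGraph.dist_self] at h
    · intro ha
      rw [← SimpleGraph.dist_eq_one_iff_adj] at ha
      omega
  · rintro ⟨hne, hna⟩
    have key : ∀ (p : (completeBipartiteGraph (Fin n) (Fin n)).Walk u v), p.length = 2 → (completeBipartiteGraph (Fin n) (Fin n)).dist u v = 2 := by
      intro p hp
      have hle : (completeBipartiteGraph (Fin n) (Fin n)).dist u v ≤ 2 := hp ▸ SimpleGraph.dist_le p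
      have h0 : (completeBipartiteGraph (Fin n) (Fin n)).dist u v ≠ 0 := by
        have := (p.reachable).pos_dist_of_ne hne
        omega
      have h1 : (completeBipartiteGraph (Fin n) (Fin n)).dist u v ≠ 1 :=
        fun h1 => hna (SimpleGraph.dist_eq_one_iff_adj.mp h1)
      omega
    cases u with
    | inl a =>
      cases v with
      | inl b =>
        have ha1 : (completeBipartiteGraph (Fin n) (Fin n)).Adj (Sum.inl a) (Sum.inr a) := by
          simp [completeBipartiteGraph]
        have ha2 : (completeBipartiteGraph (Fin n) (Fin n)).Adj (Sum.inr a) (Sum.inl b) := by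
          simp [completeBipartiteGraph]
        exact key (Walk.cons ha1 (Walk.cons ha2 Walk.nil)) rfl
      | inr b => exact absurd (by simp [completeBipartiteGraph]) hna
    | inr a =>
      cases v with
      | inl b => exact absurd (by simp [completeBipartiteGraph]) hna
      | inr b =>
        have ha1 : (completeBipartiteGraph (Fin n) (Fin n)).Adj (Sum.inr a) (Sum.inl a) := by
          simp [completeBipartiteGraph]
        have ha2 : (completeBipartiteGraph (Fin n) (Fin n)).Adj (Sum.inl a) (Sum.inr b) := by
          simp [completeBipartiteGraph]
        exact key (Walk.cons ha1 (Walk.cons ha2 Walk.nil)) rfl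

lemma bcb_ncard_adjset (u : Fin n ⊕ Fin n) : {z | (completeBipartiteGraph (Fin n) (Fin n)).Adj u z}.ncard = n := by
  cases u with
  | inl a =>
    have hset : {z | (completeBipartiteGraph (Fin n) (Fin n)).Adj (Sum.inl a) z} = Set.range (Sum.inr : Fin n → Fin n ⊕ Fin n) := by
      ext z; cases z <;> simp [completeBipartiteGraph]
    rw [hset, ← Nat.card_coe_set_eq, Nat.card_range_of_injective Sum.inr_injective,
      Nat.card_eq_fintype_card, Fintype.card_fin]
  | inr a =>
    have hset : {z | (completeBipartiteGraph (Fin n) (Fin n)).Adj (Sum.inr a) z} = Set.range (Sum.inl : Fin n → Fin n ⊕ Fin n) := by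
      ext z; cases z <;> simp [completeBipartiteGraph]
    rw [hset, ← Nat.card_coe_set_eq, Nat.card_range_of_injective Sum.inl_injective,
      Nat.card_eq_fintype_card, Fintype.card_fin]

lemma bcb_ncard_dist2set (u : Fin n ⊕ Fin n) :
    {z | z ≠ u ∧ ¬ (completeBipartiteGraph (Fin n) (Fin n)).Adj u z}.ncard = n - 1 := by
  have hcompl : ∀ (a : Fin n), ({a}ᶜ : Set (Fin n)).ncard = n - 1 := by
    intro a
    have h := Set.ncard_add_ncard_compl ({a} : Set (Fin n))
    simp only [Set.ncard_singleton, Set.ncard_univ, Nat.card_eq_fintype_card,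
      Fintype.card_fin] at h
    omega
  cases u with
  | inl a =>
    have hset : {z | z ≠ Sum.inl a ∧ ¬ (completeBipartiteGraph (Fin n) (Fin n)).Adj (Sum.inl a) z}
        = Sum.inl '' ({a}ᶜ : Set (Fin n)) := by
      ext z
      cases z with
      | inl j =>
        simp only [Set.mem_setOf_eq, Set.mem_image, Set.mem_compl_iff, Set.mem_singleton_iff,
          completeBipartiteGraph, ne_eq, Sum.inl.injEq]
        constructor
        · rintro ⟨h, -⟩; exact ⟨j, fun hj => h (by rw [hj]), rfl⟩
        · rintro ⟨x, hx, h⟩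
          refine ⟨fun hj => hx (h.trans hj), by simp⟩
      | inr j => simp [completeBipartiteGraph]
    rw [hset, Set.ncard_image_of_injective _ Sum.inl_injective, hcompl]
  | inr a =>
    have hset : {z | z ≠ Sum.inr a ∧ ¬ (completeBipartiteGraph (Fin n) (Fin n)).Adj (Sum.inr a) z}
        = Sum.inr '' ({a}ᶜ : Set (Fin n)) := by
      ext z
      cases z with
      | inr j =>
        simp only [Set.mem_setOf_eq, Set.mem_image, Set.mem_compl_iff, Set.mem_singleton_iff,
          completeBipartiteGraph, ne_eq, Sum.inr.injEq]
        constructor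
        · rintro ⟨h, -⟩; exact ⟨j, fun hj => h (by rw [hj]), rfl⟩
        · rintro ⟨x, hx, h⟩
          refine ⟨fun hj => hx (h.trans hj), by simp⟩
      | inl j => simp [completeBipartiteGraph]
    rw [hset, Set.ncard_image_of_injective _ Sum.inr_injective, hcompl]

end Bip

/-- For any subgroup `X` of the automorphism group of the complete bipartite graph
`K_{n,n}`, the graph is `(X,2)`-distance transitive if and only if it is
`(X,2)`-arc transitive. -/
theorem stmt16 (n : ℕ)
    (Γ : SimpleGraph (Fin n ⊕ Fin n)) (hΓ : Γ = completeBipartiteGraph (Fin n) (Fin n))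
    (X : Subgroup (Γ ≃g Γ)) :
    ((∀ u v : Fin n ⊕ Fin n, ∃ x ∈ X, x u = v) ∧
      ∀ i ∈ ({1, 2} : Set ℕ), ∀ u v w : Fin n ⊕ Fin n,
        Γ.dist u v = i → Γ.dist u w = i → ∃ x ∈ X, x u = u ∧ x v = w) ↔
    ((∀ u v : Fin n ⊕ Fin n, ∃ x ∈ X, x u = v) ∧
      ∀ u v w u' v' w' : Fin n ⊕ Fin n, Γ.Adj u v → Γ.Adj v w → u ≠ w →
      Γ.Adj u' v' → Γ.Adj v' w' → u' ≠ w' →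
      ∃ x ∈ X, x u = u' ∧ x v = v' ∧ x w = w') := by
  subst hΓ
  constructor
  · rintro ⟨H1, H2⟩
    refine ⟨H1, ?_⟩
    intro u v w u' v' w' huv hvw huw hu'v' hv'w' hu'w'
    haveI : Finite (completeBipartiteGraph (Fin n) (Fin n) ≃g
        completeBipartiteGraph (Fin n) (Fin n)) :=
      Finite.of_injective (fun g => (g : Fin n ⊕ Fin n → Fin n ⊕ Fin n)) DFunLike.coe_injective
    obtain ⟨x1, hx1X, hx1u⟩ := H1 u u'
    set v1 := x1 v with hv1
    set w1 := x1 w with hw1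
    have hadj_v1 : (completeBipartiteGraph (Fin n) (Fin n)).Adj u' v1 := by
      rw [← hx1u]; exact x1.map_adj_iff.mpr huv
    have hadj_w1 : w1 ≠ u' ∧ ¬ (completeBipartiteGraph (Fin n) (Fin n)).Adj u' w1 := by
      constructor
      · rw [← hx1u]; exact fun h => huw (x1.injective h).symm
      · rw [← hx1u]
        intro h
        exact bcb_not_adj_of_adj_adj huv hvw (x1.map_adj_iff.mp h)
    -- the stabilizer of u' in X
    set G₀ := stabilizer (↥X) u' with hG₀
    have horb1 : orbit (↥G₀) v1 = {z | (completeBipartiteGraph (Fin n) (Fin n)).Adj u' z} := by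
      ext z
      constructor
      · rintro ⟨g, rfl⟩
        have hgu : g.val.val u' = u' := g.2
        show (completeBipartiteGraph (Fin n) (Fin n)).Adj u' (g.val.val v1)
        rw [← hgu]
        exact g.val.val.map_adj_iff.mpr hadj_v1
      · intro hz
        have hd1 : (completeBipartiteGraph (Fin n) (Fin n)).dist u' v1 = 1 :=
          SimpleGraph.dist_eq_one_iff_adj.mpr hadj_v1
        have hd2 : (completeBipartiteGraph (Fin n) (Fin n)).dist u' z = 1 :=
          SimpleGraph.dist_eq_one_iff_adj.mpr hz
        obtain ⟨x, hxX, hxu, hxv⟩ := H2 1 (by simp) u' v1 z hd1 hd2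
        exact ⟨⟨⟨x, hxX⟩, show (⟨x, hxX⟩ : ↥X) • u' = u' from hxu⟩, hxv⟩
    have horb2 : orbit (↥G₀) w1
        = {z | z ≠ u' ∧ ¬ (completeBipartiteGraph (Fin n) (Fin n)).Adj u' z} := by
      ext z
      constructor
      · rintro ⟨g, rfl⟩
        have hgu : g.val.val u' = u' := g.2
        constructor
        · show g.val.val w1 ≠ u'
          rw [← hgu]
          exact fun h => hadj_w1.1 (g.val.val.injective h)
        · show ¬ (completeBipartiteGraph (Fin n) (Fin n)).Adj u' (g.val.val w1)
          rw [← hgu]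
          exact fun h => hadj_w1.2 (g.val.val.map_adj_iff.mp h)
      · rintro ⟨hz1, hz2⟩
        have hd1 : (completeBipartiteGraph (Fin n) (Fin n)).dist u' w1 = 2 :=
          bcb_dist_eq_two.mpr ⟨fun h => hadj_w1.1 h.symm, hadj_w1.2⟩
        have hd2 : (completeBipartiteGraph (Fin n) (Fin n)).dist u' z = 2 :=
          bcb_dist_eq_two.mpr ⟨fun h => hz1 h.symm, hz2⟩
        obtain ⟨x, hxX, hxu, hxv⟩ := H2 2 (by simp) u' w1 z hd1 hd2
        exact ⟨⟨⟨x, hxX⟩, show (⟨x, hxX⟩ : ↥X) • u' = u' from hxu⟩, hxv⟩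
    have hiv : (stabilizer (↥G₀) v1).index = n := by
      rw [index_stabilizer, horb1, bcb_ncard_adjset]
    have hiw : (stabilizer (↥G₀) w1).index = n - 1 := by
      rw [index_stabilizer, horb2, bcb_ncard_dist2set]
    have hn : 1 ≤ n := by
      rcases u' with a | a
      · exact a.pos
      · exact a.pos
    have hcop : Nat.Coprime (stabilizer (↥G₀) v1).index (stabilizer (↥G₀) w1).index := by
      rw [hiv, hiw]
      obtain ⟨m, rfl⟩ : ∃ m, n = m + 1 := ⟨n - 1, by omega⟩
      simp [Nat.succ_sub_one]
    have hc : v' ∈ orbit (↥G₀) v1 := by rw [horb1]; exact hu'v'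
    have hd : w' ∈ orbit (↥G₀) w1 := by
      rw [horb2]
      exact ⟨fun h => hu'w' h.symm, bcb_not_adj_of_adj_adj hu'v' hv'w'⟩
    obtain ⟨g, hgv, hgw⟩ := pair_orbit hc hd hcop
    refine ⟨g.val.val * x1, mul_mem (g : ↥X).2 hx1X, ?_, ?_, ?_⟩
    · show g.val.val (x1 u) = u'
      rw [hx1u]
      exact g.2
    · exact hgv
    · exact hgw
  · rintro ⟨H1, H2⟩
    refine ⟨H1, ?_⟩
    intro i hi u v w hduv hduw
    by_cases hvw : v = w
    · subst hvw
      exact ⟨1, one_mem X, rfl, rfl⟩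
    simp only [Set.mem_insert_iff, Set.mem_singleton_iff] at hi
    rcases hi with rfl | rfl
    · -- distance 1
      have huv : (completeBipartiteGraph (Fin n) (Fin n)).Adj u v :=
        SimpleGraph.dist_eq_one_iff_adj.mp hduv
      have huw : (completeBipartiteGraph (Fin n) (Fin n)).Adj u w :=
        SimpleGraph.dist_eq_one_iff_adj.mp hduw
      rcases u with a | a
      · obtain ⟨b, rfl⟩ : ∃ b, v = Sum.inr b := by
          rcases v with b | b
          · exact absurd huv (by simp [completeBipartiteGraph])
          · exact ⟨b, rfl⟩
        obtain ⟨c, rfl⟩ : ∃ c, w = Sum.inr c := by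
          rcases w with c | c
          · exact absurd huw (by simp [completeBipartiteGraph])
          · exact ⟨c, rfl⟩
        have hbc : b ≠ c := fun h => hvw (by rw [h])
        haveI : Nontrivial (Fin n) := ⟨b, c, hbc⟩
        obtain ⟨a', ha'⟩ := exists_ne a
        obtain ⟨x, hxX, hxu, hxv, -⟩ := H2 (Sum.inl a) (Sum.inr b) (Sum.inl a')
          (Sum.inl a) (Sum.inr c) (Sum.inl a')
          (by simp [completeBipartiteGraph]) (by simp [completeBipartiteGraph])
          (by simp [ha'.symm]) (by simp [completeBipartiteGraph])
          (by simp [completeBipartiteGraph]) (by simp [ha'.symm])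
        exact ⟨x, hxX, hxu, hxv⟩
      · obtain ⟨b, rfl⟩ : ∃ b, v = Sum.inl b := by
          rcases v with b | b
          · exact ⟨b, rfl⟩
          · exact absurd huv (by simp [completeBipartiteGraph])
        obtain ⟨c, rfl⟩ : ∃ c, w = Sum.inl c := by
          rcases w with c | c
          · exact ⟨c, rfl⟩
          · exact absurd huw (by simp [completeBipartiteGraph])
        have hbc : b ≠ c := fun h => hvw (by rw [h])
        haveI : Nontrivial (Fin n) := ⟨b, c, hbc⟩
        obtain ⟨a', ha'⟩ := exists_ne a
        obtain ⟨x, hxX, hxu, hxv, -⟩ := H2 (Sum.inr a) (Sum.inl b) (Sum.inr a')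
          (Sum.inr a) (Sum.inl c) (Sum.inr a')
          (by simp [completeBipartiteGraph]) (by simp [completeBipartiteGraph])
          (by simp [ha'.symm]) (by simp [completeBipartiteGraph])
          (by simp [completeBipartiteGraph]) (by simp [ha'.symm])
        exact ⟨x, hxX, hxu, hxv⟩
    · -- distance 2
      obtain ⟨hnev, hnav⟩ := bcb_dist_eq_two.mp hduv
      obtain ⟨hnew, hnaw⟩ := bcb_dist_eq_two.mp hduw
      rcases u with a | a
      · obtain ⟨b, rfl⟩ : ∃ b, v = Sum.inl b := by
          rcases v with b | b
          · exact ⟨b, rfl⟩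
          · exact absurd (by simp [completeBipartiteGraph]) hnav
        obtain ⟨c, rfl⟩ : ∃ c, w = Sum.inl c := by
          rcases w with c | c
          · exact ⟨c, rfl⟩
          · exact absurd (by simp [completeBipartiteGraph]) hnaw
        obtain ⟨x, hxX, hxu, -, hxv⟩ := H2 (Sum.inl a) (Sum.inr a) (Sum.inl b)
          (Sum.inl a) (Sum.inr a) (Sum.inl c)
          (by simp [completeBipartiteGraph]) (by simp [completeBipartiteGraph]) hnev
          (by simp [completeBipartiteGraph]) (by simp [completeBipartiteGraph]) hnew
        exact ⟨x, hxX, hxu, hxv⟩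
      · obtain ⟨b, rfl⟩ : ∃ b, v = Sum.inr b := by
          rcases v with b | b
          · exact absurd (by simp [completeBipartiteGraph]) hnav
          · exact ⟨b, rfl⟩
        obtain ⟨c, rfl⟩ : ∃ c, w = Sum.inr c := by
          rcases w with c | c
          · exact absurd (by simp [completeBipartiteGraph]) hnaw
          · exact ⟨c, rfl⟩
        obtain ⟨x, hxX, hxu, -, hxv⟩ := H2 (Sum.inr a) (Sum.inl a) (Sum.inr b)
          (Sum.inr a) (Sum.inl a) (Sum.inr c)
          (by simp [completeBipartiteGraph]) (by simp [completeBipartiteGraph]) hnev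
          (by simp [completeBipartiteGraph]) (by simp [completeBipartiteGraph]) hnew
        exact ⟨x, hxX, hxu, hxv⟩
end

section
/- The complete multipartite graph K_{m[b]} with m ≥ 3 parts of size b ≥ 2 is 2-distance transitive but not 2-arc transitive. -/
open SimpleGraph

/-- The complete multipartite graph `K_{m[b]}` with `m` parts of size `b`: vertices are
pairs `(part, position)` and two vertices are adjacent iff they lie in different parts. -/
def completeMultipartite (m b : ℕ) : SimpleGraph (Fin m × Fin b) where
  Adj u v := u.1 ≠ v.1
  symm := ⟨fun _ _ h => h.symm⟩
  loopless := ⟨fun _ h => h rfl⟩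

/-- An automorphism of `K_{m[b]}` from a permutation of parts and per-part permutations. -/
def cmIso (m b : ℕ) (σ : Fin m ≃ Fin m) (τ : Fin m → Fin b ≃ Fin b) :
    completeMultipartite m b ≃g completeMultipartite m b where
  toEquiv :=
    { toFun := fun p => (σ p.1, τ p.1 p.2)
      invFun := fun p => (σ.symm p.1, (τ (σ.symm p.1)).symm p.2)
      left_inv := fun p => by simp
      right_inv := fun p => by simp }
  map_rel_iff' := by
    intro p q
    simp only [completeMultipartite, Equiv.coe_fn_mk, ne_eq, EmbeddingLike.apply_eq_iff_eq]

lemma cm_adj {m b : ℕ} {u v : Fin m × Fin b} :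
    (completeMultipartite m b).Adj u v ↔ u.1 ≠ v.1 := Iff.rfl

lemma dist_two {m b : ℕ} {u v : Fin m × Fin b}
    (h : (completeMultipartite m b).dist u v = 2) : u.1 = v.1 ∧ u.2 ≠ v.2 := by
  have hne : u ≠ v := by rintro rfl; simp [SimpleGraph.dist_self] at h
  have hadj : ¬ (completeMultipartite m b).Adj u v := by
    intro hadj
    rw [← SimpleGraph.dist_eq_one_iff_adj] at hadj
    omega
  rw [cm_adj, not_not] at hadj
  exact ⟨hadj, fun h2 => hne (Prod.ext hadj h2)⟩

/-- `K_{m[b]}` with `m ≥ 3` parts of size `b ≥ 2` is 2-distance transitive but not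
2-arc transitive. -/
theorem stmt17 (m b : ℕ) (hm : 3 ≤ m) (hb : 2 ≤ b) :
    ((∀ u v : Fin m × Fin b, ∃ g : completeMultipartite m b ≃g completeMultipartite m b,
        g u = v) ∧
      ∀ i ∈ ({1, 2} : Set ℕ), ∀ u v w : Fin m × Fin b,
        (completeMultipartite m b).dist u v = i → (completeMultipartite m b).dist u w = i →
        ∃ g : completeMultipartite m b ≃g completeMultipartite m b, g u = u ∧ g v = w) ∧
    ¬ (∀ u v w u' v' w' : Fin m × Fin b,
        (completeMultipartite m b).Adj u v → (completeMultipartite m b).Adj v w → u ≠ w →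
        (completeMultipartite m b).Adj u' v' → (completeMultipartite m b).Adj v' w' →
          u' ≠ w' →
        ∃ g : completeMultipartite m b ≃g completeMultipartite m b,
          g u = u' ∧ g v = v' ∧ g w = w') := by
  refine ⟨⟨?_, ?_⟩, ?_⟩
  · -- vertex transitivity
    intro u v
    refine ⟨cmIso m b (Equiv.swap u.1 v.1) (fun _ => Equiv.swap u.2 v.2), ?_⟩
    simp [cmIso, Equiv.swap_apply_left]
  · -- 2-distance transitivity
    rintro i hi u v w huv huw
    rcases hi with rfl | rfl
    · -- distance 1
      rw [SimpleGraph.dist_eq_one_iff_adj] at huv huw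
      rw [cm_adj] at huv huw
      refine ⟨cmIso m b (Equiv.swap v.1 w.1)
        (fun p => if p = u.1 then Equiv.refl _ else Equiv.swap v.2 w.2), ?_, ?_⟩
      · refine Prod.ext ?_ (by simp [cmIso])
        simp [cmIso, Equiv.swap_apply_of_ne_of_ne huv huw]
      · have h1 : v.1 ≠ u.1 := Ne.symm huv
        simp [cmIso, Equiv.swap_apply_left, h1]
    · -- distance 2
      obtain ⟨h1v, h2v⟩ := dist_two huv
      obtain ⟨h1w, h2w⟩ := dist_two huw
      refine ⟨cmIso m b (Equiv.refl _)
        (fun p => if p = u.1 then Equiv.swap v.2 w.2 else Equiv.refl _), ?_, ?_⟩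
      · simp [cmIso, Equiv.swap_apply_of_ne_of_ne h2v h2w]
      · refine Prod.ext ?_ ?_
        · simpa [cmIso] using h1v.symm.trans h1w
        · simp [cmIso, ← h1v, Equiv.swap_apply_left]
  · -- not 2-arc transitive
    intro h
    have h2m : (1 : ℕ) < m := by omega
    set u : Fin m × Fin b := (⟨0, by omega⟩, ⟨0, by omega⟩)
    set v : Fin m × Fin b := (⟨1, by omega⟩, ⟨0, by omega⟩)
    set w : Fin m × Fin b := (⟨0, by omega⟩, ⟨1, by omega⟩)
    set w' : Fin m × Fin b := (⟨2, by omega⟩, ⟨0, by omega⟩)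
    obtain ⟨g, hu, hv, hw⟩ := h u v w u v w'
      (by simp [cm_adj, u, v, Fin.ext_iff]) (by simp [cm_adj, v, w, Fin.ext_iff])
      (by simp [u, w, Prod.ext_iff, Fin.ext_iff])
      (by simp [cm_adj, u, v, Fin.ext_iff]) (by simp [cm_adj, v, w', Fin.ext_iff])
      (by simp [u, w', Prod.ext_iff, Fin.ext_iff])
    have hAdj : (completeMultipartite m b).Adj (g u) (g w) := by
      rw [hu, hw]; simp [cm_adj, u, w', Fin.ext_iff]
    have : (completeMultipartite m b).Adj u w := g.map_adj_iff.mp hAdj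
    simp [cm_adj, u, w] at this
end
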